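/- arXiv:math/0112027 — 9 statements merged into one kernel-verified Lean document; each statement's English description precedes it below -/
import Mathlib

section
/- Let V be a finite-dimensional real vector space with dim V ≥ 3, and let ℙ(V) denote its projectivization (the space of 1-dimensional linear subspaces of V). If f : ℙ(V) → ℙ(V) is a bijection (not assumed continuous) such that the image under f of every projective line is a projective line, then there exists a linear automorphism g : V ≃ V inducing f, i.e. f(span{v}) = span{g v} for every nonzero v ∈ V. -/
open Submodule Module Projectivization

namespace HilbertAux

variable {V : Type*} [AddCommGroup V] [Module ℝ V] {u v w : V}

/-- Two vectors are independent. -/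
def Ind2 (v w : V) : Prop := ∀ α β : ℝ, α • v + β • w = 0 → α = 0 ∧ β = 0

/-- Three vectors are independent. -/
def Ind3 (u v w : V) : Prop :=
  ∀ α β γ : ℝ, α • u + β • v + γ • w = 0 → α = 0 ∧ β = 0 ∧ γ = 0

lemma Ind2.left_ne (h : Ind2 v w) : v ≠ 0 := fun hv => by
  simpa using (h 1 0 (by rw [hv]; module)).1

lemma Ind2.right_ne (h : Ind2 v w) : w ≠ 0 := fun hw => by
  simpa using (h 0 1 (by rw [hw]; module)).2

lemma Ind2.symm (h : Ind2 v w) : Ind2 w v := fun α β hab => by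
  have := h β α (by linear_combination (norm := module) hab)
  exact ⟨this.2, this.1⟩

lemma Ind2.add_ne (h : Ind2 v w) : v + w ≠ 0 := fun hvw => by
  simpa using (h 1 1 (by linear_combination (norm := module) hvw)).1

lemma ind2_of_not_mem (hv : v ≠ 0) (hw : w ∉ span ℝ {v}) : Ind2 v w := by
  intro α β hab
  rcases eq_or_ne β 0 with hβ | hβ
  · subst hβ
    simp only [zero_smul, add_zero, smul_eq_zero] at hab
    exact ⟨hab.resolve_right hv, rfl⟩
  · refine absurd (mem_span_singleton.2 ⟨-(β⁻¹ * α), ?_⟩) hw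
    apply smul_right_injective V hβ
    show β • (-(β⁻¹ * α) • v) = β • w
    have h2 : β • w = (-α) • v := by linear_combination (norm := module) hab
    rw [h2]
    match_scalars <;> (field_simp; try ring)

lemma Ind2.not_mem_right (h : Ind2 v w) : w ∉ span ℝ {v} := by
  intro hw
  rcases mem_span_singleton.1 hw with ⟨c, rfl⟩
  simpa using (h (-c) 1 (by module)).2

lemma Ind2.not_mem_left (h : Ind2 v w) : v ∉ span ℝ {w} := h.symm.not_mem_right

lemma ind3_of (h : Ind2 u v) (hw : w ∉ span ℝ {u, v}) : Ind3 u v w := by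
  intro α β γ habc
  rcases eq_or_ne γ 0 with hγ | hγ
  · subst hγ
    have := h α β (by linear_combination (norm := module) habc)
    exact ⟨this.1, this.2, rfl⟩
  · refine absurd (mem_span_pair.2 ⟨-(γ⁻¹ * α), -(γ⁻¹ * β), ?_⟩) hw
    apply smul_right_injective V hγ
    show γ • (-(γ⁻¹ * α) • u + -(γ⁻¹ * β) • v) = γ • w
    have h2 : γ • w = (-α) • u + (-β) • v := by linear_combination (norm := module) habc
    rw [h2]
    match_scalars <;> (field_simp; try ring)

lemma Ind3.not_mem (h : Ind3 u v w) : w ∉ span ℝ {u, v} := by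
  intro hw
  rcases mem_span_pair.1 hw with ⟨m, n, hmn⟩
  simpa using (h m n (-1) (by linear_combination (norm := module) hmn)).2.2

lemma Ind3.ind2_12 (h : Ind3 u v w) : Ind2 u v := fun α β hab =>
  (h α β 0 (by linear_combination (norm := module) hab)).imp id And.left

lemma Ind3.ind2_13 (h : Ind3 u v w) : Ind2 u w := fun α β hab => by
  have := h α 0 β (by linear_combination (norm := module) hab)
  exact ⟨this.1, this.2.2⟩

lemma Ind3.ind2_23 (h : Ind3 u v w) : Ind2 v w := fun α β hab => by
  have := h 0 α β (by linear_combination (norm := module) hab)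
  exact ⟨this.2.1, this.2.2⟩

section Bridge

variable [FiniteDimensional ℝ V]

lemma finrank_span_pair (h : Ind2 v w) :
    finrank ℝ (span ℝ {v, w} : Submodule ℝ V) = 2 := by
  have hle : finrank ℝ (span ℝ {v, w} : Submodule ℝ V) ≤ 2 := by
    have h1 : (span ℝ {v, w} : Submodule ℝ V) = span ℝ {v} ⊔ span ℝ {w} := by
      rw [show ({v, w} : Set V) = insert v {w} from rfl, span_insert]
    have := Submodule.finrank_sup_add_finrank_inf_eq (span ℝ {v}) (span ℝ {w})
    rw [finrank_span_singleton h.left_ne, finrank_span_singleton h.right_ne] at this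
    rw [h1]
    omega
  have hlt : (span ℝ {v} : Submodule ℝ V) < span ℝ {v, w} := by
    refine lt_of_le_of_ne (span_mono (by simp)) fun e => h.not_mem_right ?_
    rw [e]; exact subset_span (by simp)
  have := Submodule.finrank_lt_finrank_of_lt hlt
  rw [finrank_span_singleton h.left_ne] at this
  omega

lemma exists_not_mem (hdim : 3 ≤ finrank ℝ V) {W : Submodule ℝ V}
    (hW : finrank ℝ W ≤ 2) : ∃ u, u ∉ W := by
  by_contra hall
  push_neg at hall
  have : W = ⊤ := Submodule.eq_top_iff'.2 hall
  rw [this, finrank_top] at hW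
  omega

lemma mk_ne_mk_iff (hv : v ≠ 0) (hw : w ≠ 0) :
    Projectivization.mk ℝ v hv ≠ Projectivization.mk ℝ w hw ↔ Ind2 v w := by
  rw [Ne, mk_eq_mk_iff']
  constructor
  · intro hne
    refine ind2_of_not_mem hv fun hmem => hne ?_
    rcases mem_span_singleton.1 hmem with ⟨c, rfl⟩
    have hc : c ≠ 0 := by rintro rfl; simp at hw
    exact ⟨c⁻¹, by rw [smul_smul, inv_mul_cancel₀ hc, one_smul]⟩
  · rintro h ⟨a, ha⟩
    have := (h (-1) a (by rw [← ha]; module)).1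
    norm_num at this

lemma sub_le_iff {W : Submodule ℝ V} (hv : v ≠ 0) :
    (Projectivization.mk ℝ v hv).submodule ≤ W ↔ v ∈ W := by
  rw [submodule_mk, Submodule.span_singleton_le_iff_mem]

variable (f : Projectivization ℝ V ≃ Projectivization ℝ V)

/-- The master collinearity transfer lemma. -/
lemma master
    (hf : ∀ W : Submodule ℝ V, Module.finrank ℝ W = 2 →
      ∃ W' : Submodule ℝ V, Module.finrank ℝ W' = 2 ∧
        (⇑f) '' {x : Projectivization ℝ V | x.submodule ≤ W}
          = {x : Projectivization ℝ V | x.submodule ≤ W'})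
    {v w u v' w' u' : V} {hv : v ≠ 0} {hw : w ≠ 0} {hu : u ≠ 0}
    {hv' : v' ≠ 0} {hw' : w' ≠ 0} {hu' : u' ≠ 0}
    (hvw : Ind2 v w)
    (ev : f (Projectivization.mk ℝ v hv) = Projectivization.mk ℝ v' hv')
    (ew : f (Projectivization.mk ℝ w hw) = Projectivization.mk ℝ w' hw')
    (eu : f (Projectivization.mk ℝ u hu) = Projectivization.mk ℝ u' hu') :
    u ∈ span ℝ {v, w} ↔ u' ∈ span ℝ {v', w'} := by
  obtain ⟨W', hW'2, himg⟩ := hf (span ℝ {v, w}) (finrank_span_pair hvw)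
  have hmemv : v' ∈ W' := by
    have : f (Projectivization.mk ℝ v hv) ∈ (⇑f) '' {x | x.submodule ≤ span ℝ {v, w}} :=
      ⟨_, by simpa [Set.mem_setOf_eq, sub_le_iff hv] using subset_span (by simp), rfl⟩
    rw [himg, ev] at this
    exact (sub_le_iff hv').1 this
  have hmemw : w' ∈ W' := by
    have : f (Projectivization.mk ℝ w hw) ∈ (⇑f) '' {x | x.submodule ≤ span ℝ {v, w}} :=
      ⟨_, by simpa [Set.mem_setOf_eq, sub_le_iff hw] using subset_span (by simp), rfl⟩
    rw [himg, ew] at this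
    exact (sub_le_iff hw').1 this
  have hvw' : Ind2 v' w' := by
    rw [← mk_ne_mk_iff hv' hw', ← ev, ← ew]
    exact fun e => ((mk_ne_mk_iff hv hw).2 hvw) (f.injective e)
  have hspan : span ℝ {v', w'} = W' := by
    refine Submodule.eq_of_le_of_finrank_le (span_le.2 ?_) ?_
    · rintro x (rfl | rfl); exacts [hmemv, by simp_all]
    · rw [hW'2, finrank_span_pair hvw']
  constructor
  · intro hmem
    have : f (Projectivization.mk ℝ u hu) ∈ (⇑f) '' {x | x.submodule ≤ span ℝ {v, w}} :=
      ⟨_, by simpa [Set.mem_setOf_eq, sub_le_iff hu] using hmem, rfl⟩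
    rw [himg, eu] at this
    rw [hspan]
    exact (sub_le_iff hu').1 this
  · intro hmem
    have : Projectivization.mk ℝ u' hu' ∈ {x : Projectivization ℝ V | x.submodule ≤ W'} := by
      rw [Set.mem_setOf_eq, sub_le_iff hu', ← hspan]; exact hmem
    rw [← himg] at this
    obtain ⟨x, hx, hfx⟩ := this
    rw [← eu] at hfx
    have := f.injective hfx
    subst this
    exact (sub_le_iff hu).1 hx

end Bridge

section Construction

variable [FiniteDimensional ℝ V]

theorem construction (hdim : 3 ≤ finrank ℝ V)
    (f : Projectivization ℝ V ≃ Projectivization ℝ V)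
    (H : ∀ {v w u v' w' u' : V} {hv : v ≠ 0} {hw : w ≠ 0} {hu : u ≠ 0}
      {hv' : v' ≠ 0} {hw' : w' ≠ 0} {hu' : u' ≠ 0}, Ind2 v w →
      f (Projectivization.mk ℝ v hv) = Projectivization.mk ℝ v' hv' →
      f (Projectivization.mk ℝ w hw) = Projectivization.mk ℝ w' hw' →
      f (Projectivization.mk ℝ u hu) = Projectivization.mk ℝ u' hu' →
      (u ∈ span ℝ {v, w} ↔ u' ∈ span ℝ {v', w'})) :
    ∃ g : V ≃ₗ[ℝ] V, ∀ (v : V) (hv : v ≠ 0) (h2 : g v ≠ 0),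
      f (Projectivization.mk ℝ v hv) = Projectivization.mk ℝ (g v) h2 := by
  classical
  -- a nonzero base vector
  have : Nontrivial V := by
    rcases subsingleton_or_nontrivial V with h | h
    · have := finrank_zero_of_subsingleton (R := ℝ) (M := V); omega
    · exact h
  obtain ⟨a, ha⟩ := exists_ne (0 : V)
  set a' : V := (f (Projectivization.mk ℝ a ha)).rep with ha'def
  have ha' : a' ≠ 0 := Projectivization.rep_nonzero _
  have efa : f (Projectivization.mk ℝ a ha) = Projectivization.mk ℝ a' ha' :=
    (Projectivization.mk_rep _).symm
  -- basic nonmembership facts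
  have hnz : ∀ {v : V}, v ∉ span ℝ {a} → v ≠ 0 := fun hv h =>
    hv (h ▸ zero_mem _)
  have hsaz : ∀ {v : V}, v ∉ span ℝ {a} → a + v ∉ span ℝ {a} := by
    intro v hv hmem
    rcases mem_span_singleton.1 hmem with ⟨c, hc⟩
    exact hv (mem_span_singleton.2 ⟨c - 1, by linear_combination (norm := module) hc⟩)
  have hsm : ∀ {v : V} {c : ℝ}, c ≠ 0 → v ∉ span ℝ {a} → c • v ∉ span ℝ {a} := by
    intro v c hc hv hmem
    rcases mem_span_singleton.1 hmem with ⟨d, hd⟩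
    refine hv (mem_span_singleton.2 ⟨c⁻¹ * d, ?_⟩)
    apply smul_right_injective V hc
    show c • ((c⁻¹ * d) • a) = c • v
    rw [hd.symm]
    match_scalars <;> field_simp
  have hszz : ∀ {v : V} (_ : v ∉ span ℝ {a}) (c : ℝ), c • a + v ∉ span ℝ {a} := by
    intro v hv c hmem
    rcases mem_span_singleton.1 hmem with ⟨d, hd⟩
    exact hv (mem_span_singleton.2 ⟨d - c, by linear_combination (norm := module) hd⟩)
  -- third vector facts
  have h3rd : ∀ (v w : V), Ind2 v w → ∃ u, Ind3 v w u := by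
    intro v w h
    obtain ⟨u, hu⟩ := exists_not_mem hdim (le_of_eq (finrank_span_pair h))
    exact ⟨u, ind3_of h hu⟩
  have himg2 : ∀ {v w v' w' : V} {hv : v ≠ 0} {hw : w ≠ 0} {hv' : v' ≠ 0} {hw' : w' ≠ 0},
      Ind2 v w →
      f (Projectivization.mk ℝ v hv) = Projectivization.mk ℝ v' hv' →
      f (Projectivization.mk ℝ w hw) = Projectivization.mk ℝ w' hw' → Ind2 v' w' := by
    intro v w v' w' hv hw hv' hw' h ev ew
    rw [← mk_ne_mk_iff hv' hw', ← ev, ← ew]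
    exact fun e => ((mk_ne_mk_iff hv hw).2 h) (f.injective e)
  have himg3 : ∀ {u v w u' v' w' : V} {hu : u ≠ 0} {hv : v ≠ 0} {hw : w ≠ 0}
      {hu' : u' ≠ 0} {hv' : v' ≠ 0} {hw' : w' ≠ 0}, Ind3 u v w →
      f (Projectivization.mk ℝ u hu) = Projectivization.mk ℝ u' hu' →
      f (Projectivization.mk ℝ v hv) = Projectivization.mk ℝ v' hv' →
      f (Projectivization.mk ℝ w hw) = Projectivization.mk ℝ w' hw' → Ind3 u' v' w' := by
    intro u v w u' v' w' hu hv hw hu' hv' hw' h eu ev ew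
    exact ind3_of (himg2 h.ind2_12 eu ev)
      (fun hmem => h.not_mem ((H h.ind2_12 eu ev ew).2 hmem))
  -- construction of g
  have hgex : ∀ (v : V) (hv : v ∉ span ℝ {a}), ∃ w : V, ∃ hw : w ≠ 0, ∃ hw2 : a' + w ≠ 0,
      f (Projectivization.mk ℝ v (hnz hv)) = Projectivization.mk ℝ w hw ∧
      f (Projectivization.mk ℝ (a + v) (hnz (hsaz hv)))
        = Projectivization.mk ℝ (a' + w) hw2 := by
    intro v hv
    have hv0 : v ≠ 0 := hnz hv
    have hav : a + v ≠ 0 := hnz (hsaz hv)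
    have hIav : Ind2 a v := ind2_of_not_mem ha hv
    set r : V := (f (Projectivization.mk ℝ v hv0)).rep with hrdef
    have hr : r ≠ 0 := Projectivization.rep_nonzero _
    have er : f (Projectivization.mk ℝ v hv0) = Projectivization.mk ℝ r hr :=
      (Projectivization.mk_rep _).symm
    set s : V := (f (Projectivization.mk ℝ (a + v) hav)).rep with hsdef
    have hs : s ≠ 0 := Projectivization.rep_nonzero _
    have es : f (Projectivization.mk ℝ (a + v) hav) = Projectivization.mk ℝ s hs :=
      (Projectivization.mk_rep _).symm
    have hmem : a + v ∈ span ℝ {a, v} := mem_span_pair.2 ⟨1, 1, by module⟩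
    have hIar : Ind2 a' r := himg2 hIav efa er
    have hsmem : s ∈ span ℝ {a', r} := (H hIav efa er es).1 hmem
    obtain ⟨α, β, hαβ⟩ := mem_span_pair.1 hsmem
    have hβ : β ≠ 0 := by
      rintro rfl
      have e1 : Projectivization.mk ℝ s hs = Projectivization.mk ℝ a' ha' :=
        (Projectivization.mk_eq_mk_iff' ℝ s a' hs ha').2
          ⟨α, by linear_combination (norm := module) hαβ⟩
      have e2 := f.injective (es.trans (e1.trans efa.symm))
      rcases (Projectivization.mk_eq_mk_iff' ℝ _ _ hav ha).1 e2 with ⟨c, hc⟩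
      exact hv (mem_span_singleton.2 ⟨c - 1, by linear_combination (norm := module) hc⟩)
    have hα : α ≠ 0 := by
      rintro rfl
      have e1 : Projectivization.mk ℝ s hs = Projectivization.mk ℝ r hr :=
        (Projectivization.mk_eq_mk_iff' ℝ s r hs hr).2
          ⟨β, by linear_combination (norm := module) hαβ⟩
      have e2 := f.injective (es.trans (e1.trans er.symm))
      rcases (Projectivization.mk_eq_mk_iff' ℝ _ _ hav hv0).1 e2 with ⟨c, hc⟩
      have := (hIav 1 (1 - c) (by linear_combination (norm := module) -hc)).1
      norm_num at this
    have hw : (α⁻¹ * β) • r ≠ 0 := smul_ne_zero (mul_ne_zero (inv_ne_zero hα) hβ) hr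
    have hw2 : a' + (α⁻¹ * β) • r ≠ 0 := by
      intro h
      have := (hIar 1 (α⁻¹ * β) (by linear_combination (norm := module) h)).1
      norm_num at this
    refine ⟨(α⁻¹ * β) • r, hw, hw2, ?_, ?_⟩
    · refine er.trans ((Projectivization.mk_eq_mk_iff' ℝ r _ hr hw).2
        ⟨β⁻¹ * α, ?_⟩).symm.symm
      match_scalars
      field_simp
    · refine es.trans ((Projectivization.mk_eq_mk_iff' ℝ s _ hs hw2).2 ⟨α, ?_⟩)
      rw [show α • (a' + (α⁻¹ * β) • r) = α • a' + (α * (α⁻¹ * β)) • r by module,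
        show α * (α⁻¹ * β) = β by field_simp]
      exact hαβ
  choose g hgne hgne2 hgeq using hgex
  have hmk : ∀ (v : V) (hv : v ∉ span ℝ {a}),
      f (Projectivization.mk ℝ v (hnz hv)) = Projectivization.mk ℝ (g v hv) (hgne v hv) :=
    fun v hv => (hgeq v hv).1
  have hmk2 : ∀ (v : V) (hv : v ∉ span ℝ {a}),
      f (Projectivization.mk ℝ (a + v) (hnz (hsaz hv)))
        = Projectivization.mk ℝ (a' + g v hv) (hgne2 v hv) :=
    fun v hv => (hgeq v hv).2
  have hgcongr : ∀ {x y : V} (hx : x ∉ span ℝ {a}) (hy : y ∉ span ℝ {a}),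
      x = y → g x hx = g y hy := by
    intro x y hx hy h
    subst h
    rfl
  have hsum : ∀ {v w : V}, Ind3 a v w → v + w ∉ span ℝ {a} := by
    intro v w hI hmem
    rcases mem_span_singleton.1 hmem with ⟨c, hc⟩
    simpa using (hI (-c) 1 1 (by linear_combination (norm := module) -hc)).2.1
  -- Case 1 additivity
  have hadd1 : ∀ (v w : V) (hI : Ind3 a v w) (hv : v ∉ span ℝ {a}) (hw : w ∉ span ℝ {a})
      (hvw : v + w ∉ span ℝ {a}), g (v + w) hvw = g v hv + g w hw := by
    intro v w hI hv hw hvw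
    have ev := hmk v hv
    have ew := hmk w hw
    have e1 := hmk2 v hv
    have e2 := hmk2 w hw
    have e3 := hmk2 (v + w) hvw
    have hI' : Ind3 a' (g v hv) (g w hw) := himg3 hI efa ev ew
    have hI2vw : Ind2 (a + v) w := by
      intro α β h
      have := hI α α β (by linear_combination (norm := module) h)
      exact ⟨this.1, this.2.2⟩
    have hI2wv : Ind2 (a + w) v := by
      intro α β h
      have := hI α β α (by linear_combination (norm := module) h)
      exact ⟨this.1, this.2.1⟩
    have m1 : a + (v + w) ∈ span ℝ {a + v, w} := mem_span_pair.2 ⟨1, 1, by module⟩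
    have m2 : a + (v + w) ∈ span ℝ {a + w, v} := mem_span_pair.2 ⟨1, 1, by module⟩
    have m3 : v + w ∈ span ℝ {v, w} := mem_span_pair.2 ⟨1, 1, by module⟩
    have s1 := (H hI2vw e1 ew e3).1 m1
    have s2 := (H hI2wv e2 ev e3).1 m2
    have s3 := (H hI.ind2_23 ev ew (hmk (v + w) hvw)).1 m3
    obtain ⟨α, β, h1⟩ := mem_span_pair.1 s1
    obtain ⟨γ, δ, h2⟩ := mem_span_pair.1 s2
    obtain ⟨p, q, h3⟩ := mem_span_pair.1 s3
    obtain ⟨e1', e2', e3'⟩ := hI' (α - 1) (α - p) (β - q)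
      (by linear_combination (norm := module) h1 - h3)
    obtain ⟨f1', f2', f3'⟩ := hI' (γ - 1) (δ - p) (γ - q)
      (by linear_combination (norm := module) h2 - h3)
    rw [← h3, show p = (1:ℝ) by linarith, show q = (1:ℝ) by linarith, one_smul, one_smul]
  -- Case 2 additivity
  have hadd2 : ∀ (v w : V) (hv : v ∉ span ℝ {a}) (hw : w ∉ span ℝ {a})
      (hwm : w ∈ span ℝ {a, v}) (hvw : v + w ∉ span ℝ {a}),
      g (v + w) hvw = g v hv + g w hw := by
    intro v w hv hw hwm hvw
    obtain ⟨u, hu⟩ := exists_not_mem hdim (le_of_eq (finrank_span_pair (ind2_of_not_mem ha hv)))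
    have hIavu : Ind3 a v u := ind3_of (ind2_of_not_mem ha hv) hu
    have hu' : u ∉ span ℝ {a} := hIavu.ind2_13.not_mem_right
    obtain ⟨c, d, hcd⟩ := mem_span_pair.1 hwm
    have hd : d ≠ 0 := by
      intro h
      rw [h] at hcd
      exact hw (mem_span_singleton.2 ⟨c, by linear_combination (norm := module) hcd⟩)
    have hI1 : Ind3 a (v + u) w := by
      intro α β γ h
      obtain ⟨c1, c2, c3⟩ := hIavu (α + γ * c) (β + γ * d) β
        (by linear_combination (norm := module) h + γ • hcd)
      have hγ : γ = 0 := by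
        have hgd : γ * d = 0 := by linarith
        exact (mul_eq_zero.1 hgd).resolve_right hd
      have hα : α = 0 := by rw [hγ, zero_mul, add_zero] at c1; exact c1
      exact ⟨hα, c3, hγ⟩
    have hI2 : Ind3 a (v + w) u := by
      intro α β γ h
      obtain ⟨c1, c2, c3⟩ := hIavu (α + β * c) (β * (1 + d)) γ
        (by linear_combination (norm := module) h + β • hcd)
      have h1d : (1:ℝ) + d ≠ 0 := by
        intro h'
        apply hvw
        refine mem_span_singleton.2 ⟨c, ?_⟩
        have h2 : v + w = c • a + ((1:ℝ) + d) • v := by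
          linear_combination (norm := module) -hcd
        rw [h', zero_smul, add_zero] at h2
        exact h2.symm
      have hβ : β = 0 := (mul_eq_zero.1 c2).resolve_right h1d
      have hα : α = 0 := by rw [hβ, zero_mul, add_zero] at c1; exact c1
      exact ⟨hα, hβ, c3⟩
    have eA := hadd1 v u hIavu hv hu' (hsum hIavu)
    have eB := hadd1 (v + u) w hI1 (hsum hIavu) hw (hsum hI1)
    have eC := hadd1 (v + w) u hI2 hvw hu' (hsum hI2)
    have key : g ((v + u) + w) (hsum hI1) = g ((v + w) + u) (hsum hI2) :=
      hgcongr _ _ (by abel)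
    have hfin := eB.symm.trans (key.trans eC)
    rw [eA] at hfin
    linear_combination (norm := module) -hfin
  -- general additivity away from the line of `a`
  have hadd : ∀ (v w : V) (hv : v ∉ span ℝ {a}) (hw : w ∉ span ℝ {a})
      (hvw : v + w ∉ span ℝ {a}), g (v + w) hvw = g v hv + g w hw := by
    intro v w hv hw hvw
    by_cases hwm : w ∈ span ℝ {a, v}
    · exact hadd2 v w hv hw hwm hvw
    · exact hadd1 v w (ind3_of (ind2_of_not_mem ha hv) hwm) hv hw hvw
  -- scalar action
  have hscgen : ∀ (c : ℝ) (hc : c ≠ 0) (v : V) (hv : v ∉ span ℝ {a}),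
      ∃ t : ℝ, t ≠ 0 ∧ g (c • v) (hsm hc hv) = t • g v hv := by
    intro c hc v hv
    have e1 : Projectivization.mk ℝ (c • v) (hnz (hsm hc hv)) = Projectivization.mk ℝ v (hnz hv) :=
      (Projectivization.mk_eq_mk_iff' ℝ _ _ _ _).2 ⟨c, rfl⟩
    have e2 := (hmk (c • v) (hsm hc hv)).symm.trans ((congrArg f e1).trans (hmk v hv))
    rcases (Projectivization.mk_eq_mk_iff' ℝ _ _ _ _).1 e2 with ⟨t, ht⟩
    have ht0 : t ≠ 0 := by
      rintro rfl
      rw [zero_smul] at ht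
      exact hgne _ _ ht.symm
    exact ⟨t, ht0, ht.symm⟩
  have hsame : ∀ (c : ℝ) (hc : c ≠ 0) (v w : V) (hI : Ind3 a v w) (s t : ℝ),
      g (c • v) (hsm hc hI.ind2_12.not_mem_right) = s • g v hI.ind2_12.not_mem_right →
      g (c • w) (hsm hc hI.ind2_13.not_mem_right) = t • g w hI.ind2_13.not_mem_right →
      s = t := by
    intro c hc v w hI s t hs ht
    have hv := hI.ind2_12.not_mem_right
    have hw := hI.ind2_13.not_mem_right
    have hvw := hsum hI
    obtain ⟨e, he0, he⟩ := hscgen c hc (v + w) hvw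
    have hmem : c • v + c • w ∉ span ℝ {a} := by
      rw [← smul_add]; exact hsm hc hvw
    have h2 : g (c • (v + w)) (hsm hc hvw)
        = g (c • v) (hsm hc hv) + g (c • w) (hsm hc hw) :=
      (hgcongr _ _ (smul_add c v w)).trans (hadd _ _ _ _ hmem)
    have h3 := hadd v w hv hw hvw
    have h4 := he.symm.trans (h2.trans (by rw [hs, ht]))
    rw [h3] at h4
    have hI2 : Ind2 (g v hv) (g w hw) := himg2 hI.ind2_23 (hmk v hv) (hmk w hw)
    obtain ⟨r1, r2⟩ := hI2 (e - s) (e - t) (by linear_combination (norm := module) h4)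
    linarith
  have hspan1 : finrank ℝ (span ℝ {a} : Submodule ℝ V) ≤ 2 := by
    rw [finrank_span_singleton ha]; omega
  obtain ⟨v₀, hv₀⟩ := exists_not_mem hdim hspan1
  choose σ hσne hσv₀ using fun (c : ℝ) (hc : c ≠ 0) => hscgen c hc v₀ hv₀
  have hσ : ∀ (c : ℝ) (hc : c ≠ 0) (v : V) (hv : v ∉ span ℝ {a}),
      g (c • v) (hsm hc hv) = σ c hc • g v hv := by
    intro c hc v hv
    obtain ⟨t, ht0, ht⟩ := hscgen c hc v hv
    by_cases hvv : v ∈ span ℝ {a, v₀}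
    · obtain ⟨u, hu⟩ := exists_not_mem hdim
        (le_of_eq (finrank_span_pair (ind2_of_not_mem ha hv₀)))
      have hI0u : Ind3 a v₀ u := ind3_of (ind2_of_not_mem ha hv₀) hu
      have huv : u ∉ span ℝ {a, v} := by
        intro hm
        apply hu
        have hle : span ℝ {a, v} ≤ span ℝ {a, v₀} := span_le.2 (by
          simp only [Set.insert_subset_iff, Set.singleton_subset_iff, SetLike.mem_coe]
          exact ⟨subset_span (by simp), hvv⟩)
        exact hle hm
      have hIu : Ind3 a v u := ind3_of (ind2_of_not_mem ha hv) huv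
      obtain ⟨e, he0, he⟩ := hscgen c hc u hI0u.ind2_13.not_mem_right
      have h1 : σ c hc = e := hsame c hc v₀ u hI0u _ _ (hσv₀ c hc) he
      have h2 : t = e := hsame c hc v u hIu _ _ ht he
      rw [ht, h2, ← h1]
    · have hIv : Ind3 a v₀ v := ind3_of (ind2_of_not_mem ha hv₀) hvv
      have h1 : σ c hc = t := hsame c hc v₀ v hIv _ _ (hσv₀ c hc) ht
      rw [ht, ← h1]
  have hcancel : ∀ s t : ℝ, s • g v₀ hv₀ = t • g v₀ hv₀ → s = t := by
    intro s t h
    have h2 : (s - t) • g v₀ hv₀ = 0 := by linear_combination (norm := module) h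
    rcases smul_eq_zero.1 h2 with h3 | h3
    · linarith
    · exact absurd h3 (hgne v₀ hv₀)
  have hσcongr : ∀ (s t : ℝ) (hs : s ≠ 0) (ht : t ≠ 0), s = t → σ s hs = σ t ht := by
    intro s t hs ht h
    subst h
    rfl
  have hσ1 : σ 1 one_ne_zero = 1 :=
    hcancel _ 1 ((hσ 1 one_ne_zero v₀ hv₀).symm.trans
      ((hgcongr _ _ (one_smul ℝ v₀)).trans (one_smul ℝ (g v₀ hv₀)).symm))
  have hσmul : ∀ (s t : ℝ) (hs : s ≠ 0) (ht : t ≠ 0),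
      σ (s * t) (mul_ne_zero hs ht) = σ s hs * σ t ht := by
    intro s t hs ht
    apply hcancel
    have h1 := hσ (s * t) (mul_ne_zero hs ht) v₀ hv₀
    have h2 := hσ s hs (t • v₀) (hsm ht hv₀)
    have h3 := hσ t ht v₀ hv₀
    have h4 := hgcongr (hsm (mul_ne_zero hs ht) hv₀) (hsm hs (hsm ht hv₀))
      (by rw [smul_smul])
    rw [← h1, h4, h2, h3, smul_smul]
  have hσadd : ∀ (s t : ℝ) (hs : s ≠ 0) (ht : t ≠ 0) (hst : s + t ≠ 0),
      σ (s + t) hst = σ s hs + σ t ht := by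
    intro s t hs ht hst
    apply hcancel
    have h1 := hσ (s + t) hst v₀ hv₀
    have hmem : s • v₀ + t • v₀ ∉ span ℝ {a} := by
      rw [← add_smul]; exact hsm hst hv₀
    have h2 := hadd (s • v₀) (t • v₀) (hsm hs hv₀) (hsm ht hv₀) hmem
    rw [← h1, hgcongr (hsm hst hv₀) hmem (add_smul s t v₀), h2,
      hσ s hs v₀ hv₀, hσ t ht v₀ hv₀, add_smul]
  have hσneg : σ (-1) (by norm_num) = -1 := by
    have hsq : σ (-1) (by norm_num) * σ (-1) (by norm_num) = 1 := by
      rw [← hσmul (-1) (-1) (by norm_num) (by norm_num),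
        hσcongr _ 1 (mul_ne_zero (by norm_num) (by norm_num)) one_ne_zero (by norm_num), hσ1]
    rcases mul_self_eq_one_iff.1 hsq with h | h
    · exfalso
      have h2 : σ 2 two_ne_zero = 0 := by
        have h3 := hσadd 2 (-1) two_ne_zero (by norm_num) (by norm_num)
        rw [hσcongr _ 1 (by norm_num) one_ne_zero (by norm_num), hσ1, h] at h3
        linarith
      have h4 := hσmul 2 2⁻¹ two_ne_zero (by norm_num)
      rw [hσcongr _ 1 (mul_ne_zero two_ne_zero (by norm_num)) one_ne_zero (by norm_num),
        hσ1, h2] at h4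
      norm_num at h4
    · exact h
  have hσid : ∀ (c : ℝ) (hc : c ≠ 0), σ c hc = c := by
    have key : ∃ F : ℝ →+* ℝ, ∀ (c : ℝ) (hc : c ≠ 0), F c = σ c hc := by
      refine ⟨⟨⟨⟨fun c => dite (c = 0) (fun _ => (0:ℝ)) (fun hc => σ c hc), ?_⟩, ?_⟩,
        ?_, ?_⟩, ?_⟩
      · show (if h : (1:ℝ) = 0 then (0:ℝ) else σ 1 h) = 1
        rw [dif_neg one_ne_zero]; exact hσ1
      · intro s t
        by_cases hs : s = 0
        · subst hs; simp
        by_cases ht : t = 0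
        · subst ht; simp
        show (if h : s * t = 0 then (0:ℝ) else σ (s*t) h)
          = (if h : s = 0 then (0:ℝ) else σ s h) * (if h : t = 0 then (0:ℝ) else σ t h)
        simp only [dif_neg (mul_ne_zero hs ht), dif_neg hs, dif_neg ht]
        exact hσmul s t hs ht
      · simp
      · intro s t
        by_cases hs : s = 0
        · subst hs; simp
        by_cases ht : t = 0
        · subst ht; simp
        show (if h : s + t = 0 then (0:ℝ) else σ (s+t) h)
          = (if h : s = 0 then (0:ℝ) else σ s h) + (if h : t = 0 then (0:ℝ) else σ t h)
        by_cases hst : s + t = 0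
        · simp only [dif_pos hst, dif_neg hs, dif_neg ht]
          have h2 : σ t ht = - σ s hs := by
            rw [hσcongr t ((-1) * s) ht (mul_ne_zero (by norm_num) hs) (by linarith),
              hσmul (-1) s (by norm_num) hs, hσneg]
            ring
          rw [h2]; ring
        · simp only [dif_neg hst, dif_neg hs, dif_neg ht]
          exact hσadd s t hs ht hst
      · intro c hc
        show (if h : c = 0 then (0:ℝ) else σ c h) = σ c hc
        exact dif_neg hc
    obtain ⟨F, hF⟩ := key
    intro c hc
    rw [← hF c hc, show F = RingHom.id ℝ from Subsingleton.elim _ _]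
    rfl
  have hsmul : ∀ (c : ℝ) (hc : c ≠ 0) (v : V) (hv : v ∉ span ℝ {a}),
      g (c • v) (hsm hc hv) = c • g v hv := by
    intro c hc v hv
    rw [hσ c hc v hv, hσid]
  -- translation by a'
  have hB1 : ∀ (z : V) (hz : z ∉ span ℝ {a}), g (a + z) (hsaz hz) = a' + g z hz := by
    intro z hz
    obtain ⟨z', hI⟩ := h3rd a z (ind2_of_not_mem ha hz)
    have hz' : z' ∉ span ℝ {a} := hI.ind2_13.not_mem_right
    have e1 := hmk (a + z) (hsaz hz)
    have e2 := hmk2 z hz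
    rcases (Projectivization.mk_eq_mk_iff' ℝ _ _ _ _).1 (e1.symm.trans e2) with ⟨t, ht⟩
    have e3 := hmk (a + z') (hsaz hz')
    have e4 := hmk2 z' hz'
    rcases (Projectivization.mk_eq_mk_iff' ℝ _ _ _ _).1 (e3.symm.trans e4) with ⟨t', ht'⟩
    have haz : a + z ∉ span ℝ {a} := hsaz hz
    have haz' : a + z' ∉ span ℝ {a} := hsaz hz'
    have hsum1 : (a + z) + z' ∉ span ℝ {a} := by
      intro hmem
      rcases mem_span_singleton.1 hmem with ⟨c, hc⟩
      simpa using (hI (-(c - 1)) 1 1 (by linear_combination (norm := module) -hc)).2.1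
    have hsum2 : (a + z') + z ∉ span ℝ {a} := by
      intro hmem
      rcases mem_span_singleton.1 hmem with ⟨c, hc⟩
      simpa using (hI (-(c - 1)) 1 1 (by linear_combination (norm := module) -hc)).2.1
    have eA := hadd (a + z) z' haz hz' hsum1
    have eB := hadd (a + z') z haz' hz hsum2
    have ekey : g ((a + z) + z') hsum1 = g ((a + z') + z) hsum2 := hgcongr _ _ (by abel)
    have hcomb := (eA.symm.trans ekey).trans eB
    rw [← ht, ← ht'] at hcomb
    have hI' : Ind3 a' (g z hz) (g z' hz') := himg3 hI efa (hmk z hz) (hmk z' hz')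
    obtain ⟨c1, c2, c3⟩ := hI' (t - t') (t - 1) (1 - t')
      (by linear_combination (norm := module) hcomb)
    rw [← ht, show t = 1 by linarith, one_smul]
  have hB : ∀ (z : V) (hz : z ∉ span ℝ {a}) (c : ℝ),
      g (c • a + z) (hszz hz c) = c • a' + g z hz := by
    intro z hz c
    rcases eq_or_ne c 0 with rfl | hc
    · rw [hgcongr (hszz hz 0) hz (by module), zero_smul, zero_add]
    · have h1 : c • a + z = c • (a + c⁻¹ • z) := by
        match_scalars <;> field_simp
      have hmem : a + c⁻¹ • z ∉ span ℝ {a} := hsaz (hsm (inv_ne_zero hc) hz)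
      calc g (c • a + z) (hszz hz c)
          = g (c • (a + c⁻¹ • z)) (hsm hc hmem) := hgcongr _ _ h1
        _ = c • g (a + c⁻¹ • z) hmem := hsmul c hc _ hmem
        _ = c • (a' + g (c⁻¹ • z) (hsm (inv_ne_zero hc) hz)) := by
            rw [hB1 (c⁻¹ • z) (hsm (inv_ne_zero hc) hz)]
        _ = c • (a' + c⁻¹ • g z hz) := by rw [hsmul c⁻¹ (inv_ne_zero hc) z hz]
        _ = c • a' + g z hz := by match_scalars <;> field_simp
  have hneg : ∀ (z : V) (hz : z ∉ span ℝ {a}) (hz2 : -z ∉ span ℝ {a}),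
      g (-z) hz2 = - g z hz := by
    intro z hz hz2
    have h1 : (-z) = (-1 : ℝ) • z := by module
    rw [hgcongr hz2 (hsm (by norm_num : (-1:ℝ) ≠ 0) hz) h1, hsmul (-1) (by norm_num) z hz]
    module
  -- the total map
  have hGex : ∃ G : V → V, (∀ c : ℝ, G (c • a) = c • a') ∧
      (∀ (v : V) (hv : v ∉ span ℝ {a}), G v = g v hv) := by
    refine ⟨fun v => dite (v ∈ span ℝ {a})
      (fun h => (Classical.choose (mem_span_singleton.1 h)) • a') (fun h => g v h), ?_, ?_⟩
    · intro c
      have hmem : c • a ∈ span ℝ {a} := smul_mem _ c (mem_span_singleton_self a)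
      show (if h : c • a ∈ span ℝ {a} then Classical.choose (mem_span_singleton.1 h) • a'
        else g (c • a) h) = c • a'
      rw [dif_pos hmem]
      have hspec := Classical.choose_spec (mem_span_singleton.1 hmem)
      have he : Classical.choose (mem_span_singleton.1 hmem) = c :=
        smul_left_injective ℝ ha hspec
      rw [he]
    · intro v hv
      show (if h : v ∈ span ℝ {a} then Classical.choose (mem_span_singleton.1 h) • a'
        else g v h) = g v hv
      rw [dif_neg hv]
  obtain ⟨G, hGa, hGg⟩ := hGex
  have hG0 : G 0 = 0 := by
    have := hGa 0
    rwa [zero_smul, zero_smul] at this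
  have hmix : ∀ (c : ℝ) (y : V) (hy : y ∉ span ℝ {a}),
      G (c • a + y) = G (c • a) + G y := by
    intro c y hy
    rw [hGg _ (hszz hy c), hGa, hGg y hy, hB y hy c]
  have hGadd : ∀ x y : V, G (x + y) = G x + G y := by
    intro x y
    by_cases hx : x ∈ span ℝ {a}
    · rcases mem_span_singleton.1 hx with ⟨c, rfl⟩
      by_cases hy : y ∈ span ℝ {a}
      · rcases mem_span_singleton.1 hy with ⟨d, rfl⟩
        rw [show c • a + d • a = (c + d) • a by module, hGa, hGa, hGa, add_smul]
      · exact hmix c y hy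
    · by_cases hy : y ∈ span ℝ {a}
      · rcases mem_span_singleton.1 hy with ⟨d, rfl⟩
        rw [show x + d • a = d • a + x by abel, hmix d x hx, add_comm]
      · by_cases hxy : x + y ∈ span ℝ {a}
        · rcases mem_span_singleton.1 hxy with ⟨c, hc⟩
          have hy' : y = c • a + (-x) := by linear_combination (norm := module) -hc
          have hnx : -x ∉ span ℝ {a} := fun hm => hx (by simpa using neg_mem hm)
          rw [← hc, hGa, hGg x hx, hGg y hy,
            hgcongr hy (hszz hnx c) hy', hB (-x) hnx c, hneg x hx hnx]
          abel
        · rw [hGg (x + y) hxy, hGg x hx, hGg y hy, hadd x y hx hy hxy]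
  have hGsmul : ∀ (c : ℝ) (x : V), G (c • x) = c • G x := by
    intro c x
    by_cases hx : x ∈ span ℝ {a}
    · rcases mem_span_singleton.1 hx with ⟨d, rfl⟩
      rw [smul_smul, hGa, hGa, mul_smul]
    · rcases eq_or_ne c 0 with rfl | hc
      · rw [zero_smul, hG0, zero_smul]
      · rw [hGg _ (hsm hc hx), hGg x hx, hsmul c hc x hx]
  have hGne : ∀ x : V, x ≠ 0 → G x ≠ 0 := by
    intro x hx0
    by_cases hx : x ∈ span ℝ {a}
    · rcases mem_span_singleton.1 hx with ⟨c, rfl⟩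
      have hc : c ≠ 0 := fun h => hx0 (by rw [h, zero_smul])
      rw [hGa]
      exact smul_ne_zero hc ha'
    · rw [hGg x hx]
      exact hgne x hx
  have hGf : ∀ (x : V) (hx0 : x ≠ 0) (h2 : G x ≠ 0),
      f (Projectivization.mk ℝ x hx0) = Projectivization.mk ℝ (G x) h2 := by
    intro x hx0 h2
    by_cases hx : x ∈ span ℝ {a}
    · rcases mem_span_singleton.1 hx with ⟨c, rfl⟩
      have hc : c ≠ 0 := fun h => hx0 (by rw [h, zero_smul])
      have e1 : Projectivization.mk ℝ (c • a) hx0 = Projectivization.mk ℝ a ha :=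
        (Projectivization.mk_eq_mk_iff' ℝ _ _ _ _).2 ⟨c, rfl⟩
      have e2 : Projectivization.mk ℝ a' ha' = Projectivization.mk ℝ (G (c • a)) h2 := by
        refine (Projectivization.mk_eq_mk_iff' ℝ _ _ _ _).2 ⟨c⁻¹, ?_⟩
        rw [hGa, smul_smul, inv_mul_cancel₀ hc, one_smul]
      exact (congrArg f e1).trans (efa.trans e2)
    · exact (hmk x hx).trans ((Projectivization.mk_eq_mk_iff' ℝ _ _ _ _).2
        ⟨1, by rw [one_smul, hGg x hx]⟩)
  have hGlin_inj : Function.Injective (⟨⟨G, hGadd⟩, hGsmul⟩ : V →ₗ[ℝ] V) := by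
    rw [← LinearMap.ker_eq_bot]
    refine (Submodule.eq_bot_iff _).2 fun x hx => ?_
    by_contra h
    exact hGne x h (LinearMap.mem_ker.1 hx)
  have hGlin_bij : Function.Bijective (⟨⟨G, hGadd⟩, hGsmul⟩ : V →ₗ[ℝ] V) :=
    ⟨hGlin_inj, LinearMap.injective_iff_surjective.1 hGlin_inj⟩
  exact ⟨LinearEquiv.ofBijective _ hGlin_bij, fun v hv h2 => hGf v hv h2⟩

end Construction

end HilbertAux

/-- Hilbert's theorem for real projective spaces: any bijection of the
projectivization of a real vector space of dimension at least 3 taking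
projective lines to projective lines is induced by a linear automorphism. -/
theorem projective_collineation_is_linear
    (V : Type*) [AddCommGroup V] [Module ℝ V] [FiniteDimensional ℝ V]
    (hdim : 3 ≤ Module.finrank ℝ V)
    (f : Projectivization ℝ V ≃ Projectivization ℝ V)
    (hf : ∀ W : Submodule ℝ V, Module.finrank ℝ W = 2 →
      ∃ W' : Submodule ℝ V, Module.finrank ℝ W' = 2 ∧
        (⇑f) '' {x : Projectivization ℝ V | x.submodule ≤ W}
          = {x : Projectivization ℝ V | x.submodule ≤ W'}) :
    ∃ g : V ≃ₗ[ℝ] V, ∀ (v : V) (hv : v ≠ 0),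
      f (Projectivization.mk ℝ v hv)
        = Projectivization.mk ℝ (g v) (by simpa using hv) := by
  obtain ⟨g, hg⟩ := HilbertAux.construction hdim f
    (fun h ev ew eu => HilbertAux.master f hf h ev ew eu)
  exact ⟨g, fun v hv => hg v hv _⟩
end

section
/- Let V be a complex vector space containing two vectors that are linearly independent over ℂ, and let g : V → V be a bijective real-linear map such that (1) for every v ∈ V, the image under g of the complex line ℂ·v equals the complex line ℂ·(g v), and (2) for every v ≠ 0 there exist real numbers a, b with b > 0 such that g(i·v) = a·(g v) + b·(i·(g v)). Then g is complex linear: g(c·v) = c·(g v) for all c ∈ ℂ and v ∈ V. -/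
/-- A bijective real-linear map of a complex vector space (of complex dimension
at least two) taking complex lines to complex lines and preserving their natural
orientations is complex linear. -/
theorem real_linear_line_preserving_is_complex_linear
    (V : Type*) [AddCommGroup V] [Module ℂ V]
    (hind : ∃ v w : V, LinearIndependent ℂ ![v, w])
    (g : V →ₗ[ℝ] V) (hbij : Function.Bijective g)
    (h1 : ∀ v : V, (⇑g) '' ((Submodule.span ℂ {v} : Submodule ℂ V) : Set V)
        = ((Submodule.span ℂ {g v} : Submodule ℂ V) : Set V))
    (h2 : ∀ v : V, v ≠ 0 → ∃ a b : ℝ, 0 < b ∧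
        g (Complex.I • v) = a • g v + b • (Complex.I • g v)) :
    ∀ (c : ℂ) (v : V), g (c • v) = c • g v := by
  have hginj := hbij.injective
  have hg0 : ∀ v : V, v ≠ 0 → g v ≠ 0 := by
    intro v hv h
    exact hv (hginj (by simpa using h))
  -- preimage of a span membership
  have hkey : ∀ v w : V, w ∉ Submodule.span ℂ {v} → g w ∉ Submodule.span ℂ {g v} := by
    intro v w hw hmem
    have : g w ∈ (⇑g) '' ((Submodule.span ℂ {v} : Submodule ℂ V) : Set V) := by
      rw [h1 v]; exact hmem
    obtain ⟨u, hu, hgu⟩ := this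
    exact hw (hginj hgu ▸ hu)
  -- existence of μ with positive imaginary part
  have hmu : ∀ v : V, v ≠ 0 → ∃ μ : ℂ, 0 < μ.im ∧ g (Complex.I • v) = μ • g v := by
    intro v hv
    obtain ⟨a, b, hb, heq⟩ := h2 v hv
    refine ⟨(a : ℂ) + (b : ℂ) * Complex.I, by simp [hb], ?_⟩
    rw [heq, add_smul, ← Complex.real_smul, smul_assoc, Complex.coe_smul]
  -- symmetry of non-membership in spans
  have hsym : ∀ v w : V, v ≠ 0 → w ∉ Submodule.span ℂ {v} → v ∉ Submodule.span ℂ {w} := by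
    intro v w hv hw hmem
    rw [Submodule.mem_span_singleton] at hmem
    obtain ⟨c, hc⟩ := hmem
    have hc0 : c ≠ 0 := by rintro rfl; simp at hc; exact hv hc.symm
    apply hw
    rw [Submodule.mem_span_singleton]
    exact ⟨c⁻¹, by rw [← hc, smul_smul, inv_mul_cancel₀ hc0, one_smul]⟩
  -- μ agrees on independent pairs
  have hpair : ∀ (v w : V) (μ ν : ℂ), w ∉ Submodule.span ℂ {v} →
      v ∉ Submodule.span ℂ {w} →
      g (Complex.I • v) = μ • g v → g (Complex.I • w) = ν • g w → μ = ν := by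
    intro v w μ ν hwv hvw hμ hν
    have hw : w ≠ 0 := by rintro rfl; exact hwv (Submodule.zero_mem _)
    have hvw0 : v + w ≠ 0 := by
      intro h
      apply hwv
      rw [Submodule.mem_span_singleton]
      exact ⟨-1, by rw [neg_one_smul]; linear_combination (norm := abel) -h⟩
    obtain ⟨ρ, _, hρ⟩ := hmu (v + w) hvw0
    have heq : ρ • g v + ρ • g w = μ • g v + ν • g w := by
      have h' : g (Complex.I • (v + w)) = μ • g v + ν • g w := by
        rw [smul_add, map_add, hμ, hν]
      rw [hρ, map_add, smul_add] at h'
      exact h'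
    have heq2 : (ρ - μ) • g v = (ν - ρ) • g w := by
      rw [sub_smul, sub_smul]
      linear_combination (norm := abel) heq
    have hρμ : ρ = μ := by
      by_contra hne
      apply hkey w v hvw
      rw [Submodule.mem_span_singleton]
      refine ⟨(ν - ρ) / (ρ - μ), ?_⟩
      rw [div_eq_mul_inv, mul_comm, mul_smul, ← heq2, smul_smul,
        inv_mul_cancel₀ (sub_ne_zero.mpr hne), one_smul]
    rw [hρμ, sub_self, zero_smul] at heq2
    rcases smul_eq_zero.mp heq2.symm with h | h
    · exact (sub_eq_zero.mp h).symm
    · exact absurd h (hg0 w hw)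
  -- set up the two given independent vectors
  obtain ⟨v₀, w₀, hiv⟩ := hind
  rw [LinearIndependent.pair_iff] at hiv
  have hv₀ : v₀ ≠ 0 := by
    rintro rfl
    simpa using (hiv 1 0 (by simp)).1
  have hw₀v₀ : w₀ ∉ Submodule.span ℂ {v₀} := by
    intro hmem
    rw [Submodule.mem_span_singleton] at hmem
    obtain ⟨c, hc⟩ := hmem
    have := (hiv c (-1) (by rw [hc]; simp)).2
    norm_num at this
  have hv₀w₀ : v₀ ∉ Submodule.span ℂ {w₀} := hsym v₀ w₀ hv₀ hw₀v₀
  have hw₀ : w₀ ≠ 0 := by rintro rfl; exact hw₀v₀ (Submodule.zero_mem _)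
  -- the global constant μ₀
  obtain ⟨μ₀, hμ₀im, hμ₀⟩ := hmu v₀ hv₀
  have hglob : ∀ v : V, v ≠ 0 → g (Complex.I • v) = μ₀ • g v := by
    intro v hv
    obtain ⟨ν, hνim, hν⟩ := hmu v hv
    rcases Classical.em (v ∈ Submodule.span ℂ {v₀}) with hmem | hmem
    · rw [Submodule.mem_span_singleton] at hmem
      obtain ⟨c, hc⟩ := hmem
      have hc0 : c ≠ 0 := by rintro rfl; simp at hc; exact hv hc.symm
      have hw₀v : w₀ ∉ Submodule.span ℂ {v} := by
        intro h
        apply hw₀v₀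
        rw [Submodule.mem_span_singleton] at h ⊢
        obtain ⟨d, hd⟩ := h
        exact ⟨d * c, by rw [mul_smul, hc, hd]⟩
      have hvw₀ : v ∉ Submodule.span ℂ {w₀} := by
        intro h
        apply hv₀w₀
        rw [Submodule.mem_span_singleton] at h ⊢
        obtain ⟨d, hd⟩ := h
        exact ⟨c⁻¹ * d, by
          rw [mul_smul, hd, ← hc, smul_smul, inv_mul_cancel₀ hc0, one_smul]⟩
      obtain ⟨τ, hτim, hτ⟩ := hmu w₀ hw₀
      have e1 : μ₀ = τ := hpair v₀ w₀ μ₀ τ hw₀v₀ hv₀w₀ hμ₀ hτ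
      have e2 : τ = ν := hpair w₀ v τ ν hvw₀ hw₀v hτ hν
      rw [hν, ← e2, ← e1]
    · have := hpair v₀ v μ₀ ν hmem (hsym v₀ v hv₀ hmem) hμ₀ hν
      rw [hν, ← this]
  -- μ₀ = I
  have hI : μ₀ = Complex.I := by
    have hIv₀ : Complex.I • v₀ ≠ 0 := by
      simp [smul_eq_zero, Complex.I_ne_zero, hv₀]
    have h3 := hglob (Complex.I • v₀) hIv₀
    rw [hμ₀] at h3
    have h4 : Complex.I • Complex.I • v₀ = -v₀ := by
      rw [smul_smul, Complex.I_mul_I, neg_one_smul]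
    rw [h4, map_neg, smul_smul] at h3
    have h5 : (μ₀ * μ₀ + 1) • g v₀ = 0 := by
      rw [add_smul, one_smul, ← h3]; abel
    rcases smul_eq_zero.mp h5 with h | h
    · have hmm : μ₀ * μ₀ = -1 := by linear_combination h
      have h1r := congrArg Complex.re hmm
      have h2i := congrArg Complex.im hmm
      simp [Complex.mul_re, Complex.mul_im] at h1r h2i
      apply Complex.ext <;> simp <;> nlinarith
    · exact absurd h (hg0 v₀ hv₀)
  -- conclude
  intro c v
  rcases eq_or_ne v 0 with rfl | hv
  · simp
  · have hIv : g (Complex.I • v) = Complex.I • g v := by rw [hglob v hv, hI]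
    have hsplit : c • v = (c.re : ℂ) • v + ((c.im : ℂ) * Complex.I) • v := by
      rw [← add_smul, Complex.re_add_im]
    have e1 : g ((c.re : ℂ) • v) = (c.re : ℂ) • g v := by
      rw [Complex.coe_smul, map_smul, Complex.coe_smul]
    have e2 : g (((c.im : ℂ) * Complex.I) • v)
        = ((c.im : ℂ) * Complex.I) • g v := by
      rw [mul_smul, Complex.coe_smul, map_smul, hIv, ← Complex.coe_smul, ← mul_smul]
    rw [hsplit, map_add, e1, e2, ← add_smul, Complex.re_add_im]
end

section
/- Let a < b be real numbers and let f : ℝ → ℝ be differentiable at every point of the open interval (a, b), with derivative f'(x) = -(1 + (f x)²) for all x ∈ (a, b). Then b - a ≤ π. -/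
/-!
If `f' = -(1 + f²)` then `arctan ∘ f` has derivative `-1`, so `arctan (f x) + x` is constant on
the interval. Since `arctan` takes values in `(-π/2, π/2)`, any two points of the interval are
therefore less than `π` apart.
-/

open Real Set

theorem hasDerivAt_arctan_comp_add_id_of_riccati {f : ℝ → ℝ} {x : ℝ}
    (hf : HasDerivAt f (-(1 + f x ^ 2)) x) :
    HasDerivAt (fun y => arctan (f y) + y) 0 x := by
  have hpos : (1 : ℝ) + f x ^ 2 ≠ 0 := by positivity
  have h := hf.arctan.add (hasDerivAt_id x)
  rwa [mul_neg, one_div_mul_cancel hpos, neg_add_cancel] at h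

theorem arctan_comp_add_id_eq_of_riccati {s : Set ℝ} (hs : IsOpen s) (hs' : IsPreconnected s)
    {f : ℝ → ℝ} (hf : ∀ x ∈ s, HasDerivAt f (-(1 + f x ^ 2)) x) {x y : ℝ} (hx : x ∈ s)
    (hy : y ∈ s) : arctan (f x) + x = arctan (f y) + y := by
  have hderiv : ∀ z ∈ s, HasDerivAt (fun y => arctan (f y) + y) 0 z := fun z hz =>
    hasDerivAt_arctan_comp_add_id_of_riccati (hf z hz)
  exact hs.is_const_of_deriv_eq_zero hs'
    (fun z hz => (hderiv z hz).differentiableAt.differentiableWithinAt)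
    (fun z hz => (hderiv z hz).deriv) hx hy

theorem abs_sub_lt_pi_of_riccati {s : Set ℝ} (hs : IsOpen s) (hs' : IsPreconnected s)
    {f : ℝ → ℝ} (hf : ∀ x ∈ s, HasDerivAt f (-(1 + f x ^ 2)) x) {x y : ℝ} (hx : x ∈ s)
    (hy : y ∈ s) : |x - y| < π := by
  have hconst := arctan_comp_add_id_eq_of_riccati hs hs' hf hx hy
  rw [abs_sub_lt_iff]
  constructor <;>
    linarith [neg_pi_div_two_lt_arctan (f x), arctan_lt_pi_div_two (f x),
      neg_pi_div_two_lt_arctan (f y), arctan_lt_pi_div_two (f y)]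

theorem riccati_real_blowup_general (a b : ℝ) (f : ℝ → ℝ)
    (hf : ∀ x ∈ Set.Ioo a b, HasDerivAt f (-(1 + (f x) ^ 2)) x) :
    b - a ≤ Real.pi := by
  rcases le_or_gt a b with hab | hab
  · rw [← Real.diam_Ioo hab]
    exact Metric.diam_le_of_forall_dist_le pi_pos.le fun x hx y hy =>
      (abs_sub_lt_pi_of_riccati isOpen_Ioo isPreconnected_Ioo hf hx hy).le
  · linarith [pi_pos]

/-- Any real solution of the Riccati equation `f' = -(1 + f²)` on an open
interval `(a, b)` forces `b - a ≤ π`. -/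
theorem riccati_real_blowup (a b : ℝ) (hab : a < b) (f : ℝ → ℝ)
    (hf : ∀ x ∈ Set.Ioo a b, HasDerivAt f (-(1 + (f x) ^ 2)) x) :
    b - a ≤ Real.pi :=
  riccati_real_blowup_general a b f hf
end

section
/- Let t₀ be an m×m real matrix with no real eigenvalues, i.e. det(t₀ - λ·1) ≠ 0 for every λ ∈ ℝ. Then: (1) for every θ ∈ ℝ the matrix cos θ · 1 + sin θ · t₀ is invertible; (2) the function t(θ) = (cos θ · t₀ - sin θ · 1) · (cos θ · 1 + sin θ · t₀)⁻¹ satisfies t(0) = t₀ and t(θ + π) = t(θ) for all θ ∈ ℝ; and (3) t is differentiable in θ with derivative t'(θ) = -(1 + t(θ)²) at every θ ∈ ℝ. -/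
/-! Write `t(θ) = n(θ) a(θ)⁻¹` with `a(θ) = cos θ + sin θ t₀` and `n(θ) = cos θ t₀ - sin θ`.
Then `a' = n` and `n' = -a`, so `t' = -a a⁻¹ - n a⁻¹ n a⁻¹ = -(1 + t²)`; this computation is valid
in any Banach algebra. The denominator is invertible because for `sin θ ≠ 0` it equals
`sin θ (t₀ + cot θ)` and `t₀` has no real eigenvalue, and shifting `θ` by `π` negates both `n`
and `a`. -/

open Matrix

/-- The explicit solution of the matrix Riccati equation `t' = -(1 + t²)`
with initial condition `t₀`. -/
noncomputable def riccatiFlow (m : ℕ) (t₀ : Matrix (Fin m) (Fin m) ℝ) (θ : ℝ) :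
    Matrix (Fin m) (Fin m) ℝ :=
  (Real.cos θ • t₀ - Real.sin θ • 1) * (Real.cos θ • (1 : Matrix (Fin m) (Fin m) ℝ) + Real.sin θ • t₀)⁻¹

open scoped Ring

theorem Ring.inverse_neg {R : Type*} [Ring R] (a : R) : (-a)⁻¹ʳ = -a⁻¹ʳ := by
  by_cases ha : IsUnit a
  · obtain ⟨u, rfl⟩ := ha
    rw [← Units.val_neg, Ring.inverse_unit, Ring.inverse_unit, inv_neg, Units.val_neg]
  · rw [Ring.inverse_non_unit _ ha, Ring.inverse_non_unit _ (IsUnit.neg_iff a |>.not.mpr ha),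
      neg_zero]

theorem HasDerivAt.ringInverse {𝕜 R : Type*} [NontriviallyNormedField 𝕜] [NormedRing R]
    [HasSummableGeomSeries R] [NormedAlgebra 𝕜 R] {A : 𝕜 → R} {A' : R} {x : 𝕜}
    (hA : HasDerivAt A A' x) (hx : IsUnit (A x)) :
    HasDerivAt (fun y => (A y)⁻¹ʳ) (-((A x)⁻¹ʳ * A' * (A x)⁻¹ʳ)) x := by
  obtain ⟨u, hu⟩ := hx
  rw [← hu, Ring.inverse_unit]
  exact (hasFDerivAt_ringInverse u).comp_hasDerivAt_of_eq x hA hu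

section RingRiccatiFlow

open Real

variable {R : Type*} [Ring R] [Algebra ℝ R]

noncomputable def ringRiccatiFlow (t₀ : R) (θ : ℝ) : R :=
  (cos θ • t₀ - sin θ • 1) * (cos θ • 1 + sin θ • t₀)⁻¹ʳ

@[simp]
theorem ringRiccatiFlow_zero (t₀ : R) : ringRiccatiFlow t₀ 0 = t₀ := by
  simp [ringRiccatiFlow]

theorem ringRiccatiFlow_add_pi (t₀ : R) (θ : ℝ) :
    ringRiccatiFlow t₀ (θ + π) = ringRiccatiFlow t₀ θ := by
  rw [ringRiccatiFlow, ringRiccatiFlow, cos_add_pi, sin_add_pi, neg_smul, neg_smul, neg_smul,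
    neg_smul, ← neg_sub', ← neg_add, Ring.inverse_neg, neg_mul_neg]

end RingRiccatiFlow

section

open Real

variable {R : Type*} [NormedRing R] [NormedAlgebra ℝ R] [HasSummableGeomSeries R]

theorem hasDerivAt_ringRiccatiFlow (t₀ : R) {θ : ℝ} (hθ : IsUnit (cos θ • 1 + sin θ • t₀)) :
    HasDerivAt (ringRiccatiFlow t₀) (-(1 + ringRiccatiFlow t₀ θ ^ 2)) θ := by
  have hden : HasDerivAt (fun θ => cos θ • (1 : R) + sin θ • t₀) (cos θ • t₀ - sin θ • 1) θ :=
    (((hasDerivAt_cos θ).smul_const 1).add ((hasDerivAt_sin θ).smul_const t₀)).congr_deriv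
      (by module)
  have hnum : HasDerivAt (fun θ => cos θ • t₀ - sin θ • (1 : R)) (-(cos θ • 1 + sin θ • t₀)) θ :=
    (((hasDerivAt_cos θ).smul_const t₀).sub ((hasDerivAt_sin θ).smul_const 1)).congr_deriv
      (by module)
  refine (hnum.mul (hden.ringInverse hθ)).congr_deriv ?_
  rw [ringRiccatiFlow, neg_mul, Ring.mul_inverse_cancel _ hθ]
  noncomm_ring

end

theorem Real.cos_ne_zero_or_sin_ne_zero (θ : ℝ) : Real.cos θ ≠ 0 ∨ Real.sin θ ≠ 0 := by
  by_contra! h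
  simpa [h.1, h.2] using Real.sin_sq_add_cos_sq θ

theorem Matrix.isUnit_smul_one_add_smul {K n : Type*} [Field K] [Fintype n] [DecidableEq n]
    {M : Matrix n n K} (hM : ∀ lam : K, (M - lam • 1).det ≠ 0) {a b : K} (hab : a ≠ 0 ∨ b ≠ 0) :
    IsUnit (a • 1 + b • M) := by
  rw [isUnit_iff_isUnit_det, isUnit_iff_ne_zero]
  rcases eq_or_ne b 0 with rfl | hb
  · rw [zero_smul, add_zero, det_smul, det_one, mul_one]
    exact pow_ne_zero _ (hab.resolve_right (not_not.mpr rfl))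
  · have : a • 1 + b • M = b • (M - (-(a / b)) • 1) := by
      rw [smul_sub, smul_smul, mul_neg, mul_div_cancel₀ a hb, neg_smul, sub_neg_eq_add, add_comm]
    rw [this, det_smul]
    exact mul_ne_zero (pow_ne_zero _ hb) (hM _)

section

attribute [local instance] Matrix.linftyOpNormedAddCommGroup Matrix.linftyOpNormedSpace

theorem HasDerivAt.matrix_apply {𝕜 m n : Type*} [NontriviallyNormedField 𝕜] [CompleteSpace 𝕜]
    [Fintype m] [Fintype n] {f : 𝕜 → Matrix m n 𝕜} {f' : Matrix m n 𝕜} {x : 𝕜}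
    (hf : HasDerivAt f f' x) (i : m) (j : n) : HasDerivAt (fun y => f y i j) (f' i j) x :=
  (entryLinearMap 𝕜 𝕜 i j).toContinuousLinearMap.hasFDerivAt.comp_hasDerivAt x hf

end

attribute [local instance] Matrix.linftyOpNormedRing Matrix.linftyOpNormedAlgebra

/-- If `t₀` is a real square matrix with no real eigenvalues, then
`t(θ) = (cos θ · t₀ - sin θ · 1)(cos θ · 1 + sin θ · t₀)⁻¹` is a globally
defined, `π`-periodic solution of the matrix Riccati equation
`dt/dθ = -(1 + t²)` with `t(0) = t₀` (derivatives taken entrywise). -/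
theorem riccati_matrix_global_solution (m : ℕ) (t₀ : Matrix (Fin m) (Fin m) ℝ)
    (h : ∀ lam : ℝ, (t₀ - lam • (1 : Matrix (Fin m) (Fin m) ℝ)).det ≠ 0) :
    (∀ θ : ℝ, IsUnit (Real.cos θ • (1 : Matrix (Fin m) (Fin m) ℝ) + Real.sin θ • t₀)) ∧
    riccatiFlow m t₀ 0 = t₀ ∧
    (∀ θ : ℝ, riccatiFlow m t₀ (θ + Real.pi) = riccatiFlow m t₀ θ) ∧
    (∀ (θ : ℝ) (i j : Fin m),
      HasDerivAt (fun θ' => riccatiFlow m t₀ θ' i j)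
        ((-((1 : Matrix (Fin m) (Fin m) ℝ) + (riccatiFlow m t₀ θ) ^ 2)) i j) θ) := by
  have hunit (θ : ℝ) : IsUnit (Real.cos θ • (1 : Matrix (Fin m) (Fin m) ℝ) + Real.sin θ • t₀) :=
    isUnit_smul_one_add_smul h (Real.cos_ne_zero_or_sin_ne_zero θ)
  have hflow : riccatiFlow m t₀ = ringRiccatiFlow t₀ :=
    funext fun θ => congrArg _ (nonsing_inv_eq_ringInverse _)
  rw [hflow]
  refine ⟨hunit, ringRiccatiFlow_zero t₀, ringRiccatiFlow_add_pi t₀, fun θ i j => ?_⟩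
  exact (hasDerivAt_ringRiccatiFlow t₀ (hunit θ)).matrix_apply i j
end

section
/- Let V be a nonzero finite-dimensional real vector space and T : V → V a real-linear map with no real eigenvalues (for every λ ∈ ℝ, T - λ·id is injective). Then there exists a unique real-linear map J : V → V such that J ∘ J = -id, J ∘ T = T ∘ J, and for every λ ∈ ℂ and every nonzero z ∈ ℂ ⊗[ℝ] V with T_ℂ z = λ·z and J_ℂ z = i·z, the imaginary part of λ is positive. -/
/-!
On `ℂ ⊗[ℝ] V`, the generalized eigenspaces of `T_ℂ` for eigenvalues in the upper and in the lower
half plane span subspaces `P` and `N`; they are complementary because `T` has no real eigenvalue,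
and complex conjugation swaps them. The map acting by `i` on `P` and by `-i` on `N` therefore
commutes with `T_ℂ` and with conjugation, so it is the complexification of a real `J`.
Conversely, for any admissible `J` the `i`-eigenspace of `J_ℂ` is `T_ℂ`-invariant and contains
no eigenvector of `T_ℂ` whose eigenvalue lies outside the upper half plane, so it lies in `P`;
conjugating, the `-i`-eigenspace lies in `N`. As these two eigenspaces span, `J_ℂ` is the map above.
-/

open TensorProduct Complex Module End

namespace Module.End

section Spectral

variable {K W : Type*} [Field K] [AddCommGroup W] [Module K W]

def spectralSubspace (f : End K W) (s : Set K) : Submodule K W :=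
  ⨆ μ ∈ s, f.maxGenEigenspace μ

lemma maxGenEigenspace_le_spectralSubspace (f : End K W) {s : Set K} {μ : K} (hμ : μ ∈ s) :
    f.maxGenEigenspace μ ≤ f.spectralSubspace s :=
  le_biSup f.maxGenEigenspace hμ

lemma mapsTo_spectralSubspace {f g : End K W} (h : Commute f g) (s : Set K) :
    Set.MapsTo g (f.spectralSubspace s) (f.spectralSubspace s) :=
  show f.spectralSubspace s ≤ (f.spectralSubspace s).comap g from
    iSup₂_le fun μ hμ _ hx ↦
      maxGenEigenspace_le_spectralSubspace f hμ (mapsTo_maxGenEigenspace_of_comm h μ hx)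

lemma disjoint_spectralSubspace (f : End K W) {s t : Set K} (hst : Disjoint s t) :
    Disjoint (f.spectralSubspace s) (f.spectralSubspace t) :=
  f.independent_maxGenEigenspace.disjoint_biSup_biSup hst

lemma disjoint_maxGenEigenspace_spectralSubspace (f : End K W) {s : Set K} {μ : K} (hμ : μ ∉ s) :
    Disjoint (f.maxGenEigenspace μ) (f.spectralSubspace s) :=
  f.independent_maxGenEigenspace.disjoint_biSup hμ

end Spectral

lemma disjoint_maxGenEigenspace_of_disjoint_eigenspace {R M : Type*} [CommRing R] [AddCommGroup M]
    [Module R M] {f : End R M} {p : Submodule R M} (hp : ∀ x ∈ p, f x ∈ p) {μ : R}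
    (h : Disjoint (f.eigenspace μ) p) : Disjoint (f.maxGenEigenspace μ) p := by
  rw [disjoint_comm, Submodule.disjoint_iff_comap_eq_bot, maxGenEigenspace,
    ← genEigenspace_restrict f p ⊤ μ hp]
  by_contra hne
  exact (HasUnifEigenvalue.lt zero_lt_one hne) (eigenspace_restrict_eq_bot hp h)

lemma le_spectralSubspace {K W : Type*} [Field K] [IsAlgClosed K] [AddCommGroup W] [Module K W]
    [FiniteDimensional K W] {f : End K W} {p : Submodule K W} (hp : ∀ x ∈ p, f x ∈ p) {s : Set K}
    (h : ∀ μ ∉ s, Disjoint (f.eigenspace μ) p) : p ≤ f.spectralSubspace s := by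
  rw [Submodule.eq_iSup_inf_genEigenspace ⊤ hp f.iSup_maxGenEigenspace_eq_top]
  refine iSup_le fun μ ↦ ?_
  by_cases hμ : μ ∈ s
  · exact inf_le_right.trans (maxGenEigenspace_le_spectralSubspace f hμ)
  · rw [(disjoint_maxGenEigenspace_of_disjoint_eigenspace hp (h μ hμ)).symm.eq_bot]
    exact bot_le

end Module.End

namespace Complexification

variable {V W : Type*} [AddCommGroup V] [Module ℝ V] [AddCommGroup W] [Module ℝ W]

noncomputable def conj : ℂ ⊗[ℝ] V →ₗ⋆[ℂ] ℂ ⊗[ℝ] V where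
  toFun := (conjAe : ℂ →ₐ[ℝ] ℂ).toLinearMap.rTensor V
  map_add' := map_add _
  map_smul' c z := by
    induction z using TensorProduct.induction_on with
    | zero => simp
    | tmul a v => simp [smul_tmul']
    | add x y hx hy => simp_all [smul_add]

@[simp] lemma conj_tmul (c : ℂ) (v : V) : conj (c ⊗ₜ[ℝ] v) = (starRingEnd ℂ c) ⊗ₜ v := rfl

@[simp] lemma conj_conj (z : ℂ ⊗[ℝ] V) : conj (conj z) = z := by
  induction z using TensorProduct.induction_on with
  | zero => simp
  | tmul a v => simp
  | add x y hx hy => simp_all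

lemma conj_baseChange (f : V →ₗ[ℝ] W) (z : ℂ ⊗[ℝ] V) :
    conj (f.baseChange ℂ z) = f.baseChange ℂ (conj z) :=
  LinearMap.rTensor_baseChange (conjAe : ℂ →ₐ[ℝ] ℂ) z f

noncomputable def re : ℂ ⊗[ℝ] V →ₗ[ℝ] V :=
  TensorProduct.lift (LinearMap.lsmul ℝ V ∘ₗ reLm)

@[simp] lemma re_tmul (c : ℂ) (v : V) : re (c ⊗ₜ[ℝ] v) = c.re • v := rfl

lemma two_smul_one_tmul_re (z : ℂ ⊗[ℝ] V) : (2 : ℂ) • (1 ⊗ₜ[ℝ] re z) = z + conj z := by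
  induction z using TensorProduct.induction_on with
  | zero => simp
  | tmul c v =>
    rw [re_tmul, conj_tmul, tmul_smul, ← add_tmul, add_conj, smul_tmul', smul_tmul',
      ← coe_smul]
    simp [mul_comm]
  | add x y hx hy => rw [map_add, tmul_add, smul_add, hx, hy, map_add]; abel

lemma one_tmul_re_of_conj_eq {z : ℂ ⊗[ℝ] V} (hz : conj z = z) : 1 ⊗ₜ[ℝ] re z = z :=
  smul_right_injective _ (two_ne_zero (α := ℂ)) <| by
    change (2 : ℂ) • _ = (2 : ℂ) • z
    rw [two_smul_one_tmul_re, hz, two_smul]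

lemma baseChange_injective : Function.Injective (LinearMap.baseChange ℂ : (V →ₗ[ℝ] W) → _) := by
  intro f g h
  ext v
  simpa using congr_arg re (LinearMap.congr_fun h (1 ⊗ₜ v))

lemma exists_baseChange_eq (g : ℂ ⊗[ℝ] V →ₗ[ℂ] ℂ ⊗[ℝ] W) (hg : ∀ z, g (conj z) = conj (g z)) :
    ∃ f : V →ₗ[ℝ] W, f.baseChange ℂ = g := by
  refine ⟨re ∘ₗ g.restrictScalars ℝ ∘ₗ TensorProduct.mk ℝ ℂ V 1, ?_⟩
  ext v
  simp [one_tmul_re_of_conj_eq (by simpa using (hg (1 ⊗ₜ v)).symm)]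

lemma conj_sub_smul_pow_apply (f : End ℝ V) (μ : ℂ) (k : ℕ) (z : ℂ ⊗[ℝ] V) :
    conj (((f.baseChange ℂ - μ • 1) ^ k) z) =
      ((f.baseChange ℂ - starRingEnd ℂ μ • 1) ^ k) (conj z) := by
  induction k generalizing z with
  | zero => simp
  | succ k ih =>
    simp only [pow_succ, mul_apply, ih, LinearMap.sub_apply, LinearMap.smul_apply,
      one_apply, map_sub, map_smulₛₗ, conj_baseChange, RingHom.id_apply]

lemma conj_mem_maxGenEigenspace {f : End ℝ V} {μ : ℂ} {z : ℂ ⊗[ℝ] V}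
    (hz : z ∈ maxGenEigenspace (f.baseChange ℂ) μ) :
    conj z ∈ maxGenEigenspace (f.baseChange ℂ) (starRingEnd ℂ μ) := by
  obtain ⟨k, hk⟩ := (mem_maxGenEigenspace _ _ _).mp hz
  exact (mem_maxGenEigenspace _ _ _).mpr
    ⟨k, by rw [← conj_sub_smul_pow_apply, hk, map_zero]⟩

lemma conj_mem_spectralSubspace {f : End ℝ V} {s t : Set ℂ} (hst : ∀ μ ∈ s, starRingEnd ℂ μ ∈ t)
    {z : ℂ ⊗[ℝ] V} (hz : z ∈ spectralSubspace (f.baseChange ℂ) s) :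
    conj z ∈ spectralSubspace (f.baseChange ℂ) t :=
  (show _ ≤ (spectralSubspace (f.baseChange ℂ) t).comap conj from
    iSup₂_le fun μ hμ _ hx ↦ maxGenEigenspace_le_spectralSubspace _ (hst μ hμ)
      (conj_mem_maxGenEigenspace hx)) hz

end Complexification

section ComplexStructure

variable {W : Type*} [AddCommGroup W] [Module ℂ W] {P N : Submodule ℂ W}

noncomputable def complexStructureOfIsCompl (h : IsCompl P N) : End ℂ W :=
  LinearMap.ofIsCompl h (I • P.subtype) (-(I • N.subtype))

variable (h : IsCompl P N)

lemma complexStructureOfIsCompl_apply_left {x : W} (hx : x ∈ P) :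
    complexStructureOfIsCompl h x = I • x :=
  LinearMap.ofIsCompl_apply_left h ⟨x, hx⟩

lemma complexStructureOfIsCompl_apply_right {x : W} (hx : x ∈ N) :
    complexStructureOfIsCompl h x = -(I • x) :=
  LinearMap.ofIsCompl_apply_right h ⟨x, hx⟩

lemma complexStructureOfIsCompl_mul_self :
    complexStructureOfIsCompl h * complexStructureOfIsCompl h = -1 := by
  refine LinearMap.ext_on_codisjoint h.codisjoint (fun x hx ↦ ?_) (fun x hx ↦ ?_)
  · simp [complexStructureOfIsCompl_apply_left h hx, smul_smul]
  · simp [complexStructureOfIsCompl_apply_right h hx, smul_smul]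

lemma commute_complexStructureOfIsCompl {f : End ℂ W} (hP : Set.MapsTo f P P)
    (hN : Set.MapsTo f N N) : Commute f (complexStructureOfIsCompl h) := by
  refine LinearMap.ext_on_codisjoint h.codisjoint (fun x hx ↦ ?_) (fun x hx ↦ ?_)
  · simp [complexStructureOfIsCompl_apply_left h hx,
      complexStructureOfIsCompl_apply_left h (hP hx)]
  · simp [complexStructureOfIsCompl_apply_right h hx,
      complexStructureOfIsCompl_apply_right h (hN hx)]

lemma eigenspace_complexStructureOfIsCompl_I :
    (complexStructureOfIsCompl h).eigenspace I = P := by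
  refine le_antisymm (fun z hz ↦ ?_) (fun x hx ↦ ?_)
  · obtain ⟨x, y, hx, hy, rfl⟩ := Submodule.codisjoint_iff_exists_add_eq.mp h.codisjoint z
    rw [mem_eigenspace_iff, map_add, complexStructureOfIsCompl_apply_left h hx,
      complexStructureOfIsCompl_apply_right h hy, smul_add] at hz
    have hy0 : (2 * I) • y = 0 := by linear_combination (norm := module) -hz
    rw [smul_eq_zero_iff_right (by simp)] at hy0
    rwa [hy0, add_zero]
  · rw [mem_eigenspace_iff, complexStructureOfIsCompl_apply_left h hx]

lemma codisjoint_eigenspace_I_neg_I {g : End ℂ W} (hg : g * g = -1) :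
    Codisjoint (g.eigenspace I) (g.eigenspace (-I)) := by
  refine Submodule.codisjoint_iff_exists_add_eq.mpr fun z ↦ ?_
  have hgg : g (g z) = -z := LinearMap.congr_fun hg z
  refine ⟨(2⁻¹ : ℂ) • (z - I • g z), (2⁻¹ : ℂ) • (z + I • g z), ?_, ?_, by module⟩
  · rw [mem_eigenspace_iff, map_smul, map_sub, map_smul, hgg]
    match_scalars
    · linear_combination (2⁻¹ : ℂ) * I_sq
    · ring
  · rw [mem_eigenspace_iff, map_smul, map_add, map_smul, hgg]
    match_scalars
    · linear_combination (2⁻¹ : ℂ) * I_sq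
    · ring

end ComplexStructure

section Canonical

open Complexification

variable {V : Type*} [AddCommGroup V] [Module ℝ V] (T : End ℝ V)

noncomputable def upperSpectralSubspace : Submodule ℂ (ℂ ⊗[ℝ] V) :=
  spectralSubspace (T.baseChange ℂ) {μ | 0 < μ.im}

noncomputable def lowerSpectralSubspace : Submodule ℂ (ℂ ⊗[ℝ] V) :=
  spectralSubspace (T.baseChange ℂ) {μ | μ.im < 0}

lemma conj_mem_lowerSpectralSubspace {z : ℂ ⊗[ℝ] V} (hz : z ∈ upperSpectralSubspace T) :
    conj z ∈ lowerSpectralSubspace T :=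
  conj_mem_spectralSubspace (fun μ hμ ↦ by simpa using hμ) hz

lemma conj_mem_upperSpectralSubspace {z : ℂ ⊗[ℝ] V} (hz : z ∈ lowerSpectralSubspace T) :
    conj z ∈ upperSpectralSubspace T :=
  conj_mem_spectralSubspace (fun μ hμ ↦ by simpa using hμ) hz

variable {T}

lemma eigenspace_baseChange_ofReal_eq_bot {r : ℝ}
    (hr : Function.Injective (T - r • (LinearMap.id : V →ₗ[ℝ] V))) :
    eigenspace (T.baseChange ℂ) r = ⊥ := by
  have hr' : T.baseChange ℂ - (r : ℂ) • 1 = (T - r • LinearMap.id).baseChange ℂ := by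
    rw [LinearMap.baseChange_sub, LinearMap.baseChange_smul, LinearMap.baseChange_id,
      ← one_eq_id, ← algebraMap_smul ℂ r, coe_algebraMap]
  rw [eigenspace_def, LinearMap.ker_eq_bot, hr', LinearMap.baseChange_eq_ltensor]
  exact Module.Flat.lTensor_preserves_injective_linearMap _ hr

variable [FiniteDimensional ℝ V]

lemma isCompl_upperSpectralSubspace_lowerSpectralSubspace
    (hT : ∀ r : ℝ, Function.Injective (T - r • (LinearMap.id : V →ₗ[ℝ] V))) :
    IsCompl (upperSpectralSubspace T) (lowerSpectralSubspace T) := by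
  refine ⟨disjoint_spectralSubspace _ <| Set.disjoint_left.mpr
    fun μ (h₁ : 0 < μ.im) (h₂ : μ.im < 0) ↦ h₁.not_gt h₂, ?_⟩
  have hreal : ∀ μ ∉ {μ : ℂ | μ.im ≠ 0}, Disjoint (eigenspace (T.baseChange ℂ) μ) ⊤ := by
    intro μ hμ
    obtain ⟨r, rfl⟩ : ∃ r : ℝ, (r : ℂ) = μ := ⟨μ.re, Complex.ext rfl (not_not.mp hμ).symm⟩
    simp [eigenspace_baseChange_ofReal_eq_bot (hT r)]
  rw [codisjoint_iff, ← top_le_iff]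
  refine (le_spectralSubspace (p := ⊤) (fun _ _ ↦ Submodule.mem_top) hreal).trans ?_
  refine iSup₂_le fun μ hμ ↦ (Ne.lt_or_gt hμ).elim (fun h ↦ ?_) (fun h ↦ ?_)
  · exact le_sup_of_le_right (maxGenEigenspace_le_spectralSubspace _ h)
  · exact le_sup_of_le_left (maxGenEigenspace_le_spectralSubspace _ h)

variable (T) in
def IsPositiveComplexStructure (J : V →ₗ[ℝ] V) : Prop :=
  J ∘ₗ J = -LinearMap.id ∧ J ∘ₗ T = T ∘ₗ J ∧
    ∀ (μ : ℂ) (z : ℂ ⊗[ℝ] V), z ≠ 0 → T.baseChange ℂ z = μ • z →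
      J.baseChange ℂ z = I • z → 0 < μ.im

variable (hT : ∀ r : ℝ, Function.Injective (T - r • (LinearMap.id : V →ₗ[ℝ] V)))

noncomputable def complexifiedCanonicalComplexStructure : End ℂ (ℂ ⊗[ℝ] V) :=
  complexStructureOfIsCompl (isCompl_upperSpectralSubspace_lowerSpectralSubspace hT)

lemma complexifiedCanonicalComplexStructure_conj (z : ℂ ⊗[ℝ] V) :
    complexifiedCanonicalComplexStructure hT (conj z) =
      conj (complexifiedCanonicalComplexStructure hT z) := by
  have hc := isCompl_upperSpectralSubspace_lowerSpectralSubspace hT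
  refine LinearMap.congr_fun (f := (complexifiedCanonicalComplexStructure hT).comp conj)
    (g := conj.comp (complexifiedCanonicalComplexStructure hT))
    (LinearMap.ext_on_codisjoint hc.codisjoint (fun x hx ↦ ?_) (fun x hx ↦ ?_)) z
  · simp [complexifiedCanonicalComplexStructure, complexStructureOfIsCompl_apply_left hc hx,
      complexStructureOfIsCompl_apply_right hc (conj_mem_lowerSpectralSubspace T hx)]
  · simp [complexifiedCanonicalComplexStructure, complexStructureOfIsCompl_apply_right hc hx,
      complexStructureOfIsCompl_apply_left hc (conj_mem_upperSpectralSubspace T hx)]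

noncomputable def canonicalComplexStructure : V →ₗ[ℝ] V :=
  (exists_baseChange_eq _ (complexifiedCanonicalComplexStructure_conj hT)).choose

lemma baseChange_canonicalComplexStructure :
    (canonicalComplexStructure hT).baseChange ℂ = complexifiedCanonicalComplexStructure hT :=
  (exists_baseChange_eq _ (complexifiedCanonicalComplexStructure_conj hT)).choose_spec

lemma isPositiveComplexStructure_canonicalComplexStructure :
    IsPositiveComplexStructure T (canonicalComplexStructure hT) := by
  have hc := isCompl_upperSpectralSubspace_lowerSpectralSubspace hT
  have hJ := baseChange_canonicalComplexStructure hT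
  refine ⟨baseChange_injective ?_, baseChange_injective ?_, fun μ z hz hTz hJz ↦ ?_⟩
  · rw [LinearMap.baseChange_comp, LinearMap.baseChange_neg, LinearMap.baseChange_id, hJ]
    exact complexStructureOfIsCompl_mul_self hc
  · rw [LinearMap.baseChange_comp, LinearMap.baseChange_comp, hJ]
    exact (commute_complexStructureOfIsCompl hc (mapsTo_spectralSubspace (Commute.refl _) _)
      (mapsTo_spectralSubspace (Commute.refl _) _)).eq.symm
  · have hzP : z ∈ upperSpectralSubspace T := by
      rw [hJ] at hJz
      exact eigenspace_complexStructureOfIsCompl_I hc ▸ mem_eigenspace_iff.mpr hJz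
    by_contra hμ
    exact hz ((disjoint_maxGenEigenspace_spectralSubspace (T.baseChange ℂ)
      (s := {μ : ℂ | 0 < μ.im}) hμ).le_bot
      ⟨eigenspace_le_maxGenEigenspace (mem_eigenspace_iff.mpr hTz), hzP⟩)

lemma baseChange_eq_of_isPositiveComplexStructure {J : V →ₗ[ℝ] V}
    (hJ : IsPositiveComplexStructure T J) :
    J.baseChange ℂ = complexifiedCanonicalComplexStructure hT := by
  obtain ⟨hJJ, hJT, hpos⟩ := hJ
  have hc := isCompl_upperSpectralSubspace_lowerSpectralSubspace hT
  have hJJℂ : J.baseChange ℂ * J.baseChange ℂ = -1 := by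
    rw [mul_eq_comp, ← LinearMap.baseChange_comp, hJJ, LinearMap.baseChange_neg,
      LinearMap.baseChange_id, one_eq_id]
  have hJTℂ : Commute (J.baseChange ℂ) (T.baseChange ℂ) := by
    rw [commute_iff_eq, mul_eq_comp, mul_eq_comp,
      ← LinearMap.baseChange_comp, ← LinearMap.baseChange_comp, hJT]
  have hI : eigenspace (J.baseChange ℂ) I ≤ upperSpectralSubspace T := by
    refine le_spectralSubspace (mapsTo_genEigenspace_of_comm hJTℂ I 1) fun μ hμ ↦ ?_
    refine Submodule.disjoint_def.mpr fun x hTx hJx ↦ by_contra fun hx ↦ hμ ?_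
    exact hpos μ x hx (mem_eigenspace_iff.mp hTx) (mem_eigenspace_iff.mp hJx)
  have hnegI : eigenspace (J.baseChange ℂ) (-I) ≤ lowerSpectralSubspace T := by
    intro x hx
    have hconj : conj x ∈ eigenspace (J.baseChange ℂ) I := by
      rw [mem_eigenspace_iff, ← conj_baseChange, mem_eigenspace_iff.mp hx, map_smulₛₗ]
      simp
    simpa using conj_mem_lowerSpectralSubspace T (hI hconj)
  refine LinearMap.ext_on_codisjoint (codisjoint_eigenspace_I_neg_I hJJℂ)
    (fun x hx ↦ ?_) (fun x hx ↦ ?_)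
  · rw [mem_eigenspace_iff.mp hx, complexifiedCanonicalComplexStructure,
      complexStructureOfIsCompl_apply_left hc (hI hx)]
  · rw [mem_eigenspace_iff.mp hx, complexifiedCanonicalComplexStructure,
      complexStructureOfIsCompl_apply_right hc (hnegI hx), neg_smul]

end Canonical

theorem complex_structure_of_no_real_eigenvalues_general
    (V : Type*) [AddCommGroup V] [Module ℝ V] [FiniteDimensional ℝ V]
    (T : V →ₗ[ℝ] V)
    (hT : ∀ lam : ℝ, Function.Injective (T - lam • (LinearMap.id : V →ₗ[ℝ] V))) :
    ∃! J : V →ₗ[ℝ] V,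
      J ∘ₗ J = -LinearMap.id ∧
      J ∘ₗ T = T ∘ₗ J ∧
      ∀ (lam : ℂ) (z : ℂ ⊗[ℝ] V), z ≠ 0 →
        LinearMap.baseChange ℂ T z = lam • z →
        LinearMap.baseChange ℂ J z = Complex.I • z →
        0 < lam.im :=
  ⟨canonicalComplexStructure hT, isPositiveComplexStructure_canonicalComplexStructure hT,
    fun _ hJ ↦ Complexification.baseChange_injective <|
      (baseChange_eq_of_isPositiveComplexStructure hT hJ).trans
        (baseChange_canonicalComplexStructure hT).symm⟩

/-- A linear transformation `T` of a nonzero finite-dimensional real vector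
space with no real eigenvalues determines a unique complex structure `J`
commuting with `T` such that on the complexification, eigenvectors of `T`
lying in the `i`-eigenspace of `J` have eigenvalues of positive imaginary
part. -/
theorem complex_structure_of_no_real_eigenvalues
    (V : Type*) [AddCommGroup V] [Module ℝ V] [FiniteDimensional ℝ V]
    [Nontrivial V]
    (T : V →ₗ[ℝ] V)
    (hT : ∀ lam : ℝ, Function.Injective (T - lam • (LinearMap.id : V →ₗ[ℝ] V))) :
    ∃! J : V →ₗ[ℝ] V,
      J ∘ₗ J = -LinearMap.id ∧
      J ∘ₗ T = T ∘ₗ J ∧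
      ∀ (lam : ℂ) (z : ℂ ⊗[ℝ] V), z ≠ 0 →
        LinearMap.baseChange ℂ T z = lam • z →
        LinearMap.baseChange ℂ J z = Complex.I • z →
        0 < lam.im :=
  complex_structure_of_no_real_eigenvalues_general V T hT
end

section
/- Let m ≥ 1 and let s be an m×m complex matrix whose spectrum lies in the open unit disk. Then there exists a unique pair of real numbers (a, b) with a > 0 such that, setting α = (a + a⁻¹) + b·i and β = b + (a - a⁻¹)·i, the matrix conj(β)·s + conj(α)·1 is invertible and the matrix (α·s + β·1)·(conj(β)·s + conj(α)·1)⁻¹ has trace zero. -/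
/-!
Let `λ₁, …, λ_m` be the eigenvalues of `s`, counted with multiplicity, and put
`z = conj β / conj α` (`hingePoint a b`). Then `conj β • s + conj α • 1 = conj α • (1 + z • s)`,
and the trace of the transformed matrix is `(α / conj α) * ∑ i, φ_z λᵢ`, where
`φ_z w = (w + conj z) / (1 + z * w)` (`diskMobius z w`) is an automorphism of the unit disk.
As `(a, b)` ranges over `(0, ∞) × ℝ`, the point `z` ranges bijectively over the disk: under the
Cayley map `z ↦ (1 - I z) / (1 + I z)` it becomes `a⁻² - (b / a) I`, a general point of the
right half-plane. So it suffices to show that `∑ i, φ_z λᵢ = 0` has exactly one solution `z` in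
the disk.

Existence: the potential `∑ i, log (|1 + z λᵢ|² / (1 - |z|²))` is positive near the boundary and
vanishes at `0`, so it has an interior minimum, and its gradient there is a positive multiple of
`conj (∑ i, φ_z λᵢ)`. Uniqueness: precomposing with `φ_{z₁}` reduces to the case `z₁ = 0`, i.e.
`∑ i, λᵢ = 0`, and there `Re (z * φ_z w) > Re (z * w)` for `z ≠ 0` rules out a second solution.
-/

open Matrix

/-- The action on an `m × m` complex matrix `s` of the element of the group `N`
of disk automorphisms with parameters `a > 0`, `b ∈ ℝ`, given by the linear
fractional transformation `s ↦ (α·s + β·1)(conj β·s + conj α·1)⁻¹` where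
`α = (a + a⁻¹) + b·i` and `β = b + (a - a⁻¹)·i`. -/
noncomputable def hingeLFT (m : ℕ) (s : Matrix (Fin m) (Fin m) ℂ) (a b : ℝ) :
    Matrix (Fin m) (Fin m) ℂ :=
  (((((a : ℂ) + (a : ℂ)⁻¹) + (b : ℂ) * Complex.I) • s +
      ((b : ℂ) + ((a : ℂ) - (a : ℂ)⁻¹) * Complex.I) • (1 : Matrix (Fin m) (Fin m) ℂ)) *
  ((starRingEnd ℂ ((b : ℂ) + ((a : ℂ) - (a : ℂ)⁻¹) * Complex.I)) • s +
      (starRingEnd ℂ (((a : ℂ) + (a : ℂ)⁻¹) + (b : ℂ) * Complex.I)) •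
        (1 : Matrix (Fin m) (Fin m) ℂ))⁻¹)

open Polynomial Complex ComplexConjugate Filter Topology Metric

namespace Matrix

variable {n K : Type*} [Fintype n] [DecidableEq n]

theorem trace_eq_sum_of_charpoly_eq_prod {R : Type*} [CommRing R] {s : Matrix n n R}
    {l : n → R} (hl : s.charpoly = ∏ i, (X - C (l i))) : s.trace = ∑ i, l i := by
  rw [trace_eq_neg_charpoly_nextCoeff, hl, prod_X_sub_C_nextCoeff, neg_neg]

theorem exists_charpoly_eq_prod [Field K] [IsAlgClosed K] (s : Matrix n n K) :
    ∃ l : n → K, s.charpoly = ∏ i, (X - C (l i)) := by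
  classical
  have hsplit := IsAlgClosed.splits s.charpoly
  obtain ⟨e⟩ : Nonempty (n ≃ (s.charpoly.roots : Type _)) := Fintype.card_eq.mp <| by
    rw [Multiset.card_coe, ← hsplit.natDegree_eq_card_roots, charpoly_natDegree_eq_dim]
  refine ⟨fun i => e i, ?_⟩
  conv_lhs => rw [hsplit.eq_prod_roots_of_monic s.charpoly_monic]
  rw [Equiv.prod_comp e (fun x => X - C (x : K)), Finset.prod_eq_multiset_prod]
  exact congrArg _ (Multiset.map_univ _ _).symm

variable [Field K] {s : Matrix n n K} {l : n → K}

theorem det_smul_add_smul_one (hl : s.charpoly = ∏ i, (X - C (l i))) (P Q : K) :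
    (P • s + Q • (1 : Matrix n n K)).det = ∏ i, (P * l i + Q) := by
  by_cases hP : P = 0
  · simp [hP, Finset.prod_const]
  have hscale : P • s + Q • (1 : Matrix n n K) = (-P) • (scalar n (-Q / P) - s) := by
    have hQ : -P * (-Q / P) = Q := by field_simp
    rw [scalar_apply, ← smul_one_eq_diagonal, smul_sub, smul_smul, hQ, neg_smul, sub_neg_eq_add,
      add_comm]
  rw [hscale, det_smul, ← eval_charpoly, hl, eval_prod, ← Finset.card_univ,
    ← Finset.prod_const, ← Finset.prod_mul_distrib]
  refine Finset.prod_congr rfl fun i _ => ?_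
  simp only [eval_sub, eval_X, eval_C]
  field_simp
  ring

theorem det_sub_smul_one_eq_zero (hl : s.charpoly = ∏ i, (X - C (l i))) (i : n) :
    (s - l i • (1 : Matrix n n K)).det = 0 := by
  rw [sub_eq_add_neg, ← neg_smul, ← one_smul K s, det_smul_add_smul_one hl]
  exact Finset.prod_eq_zero (Finset.mem_univ i) (by ring)

theorem isUnit_smul_add_smul_one (hl : s.charpoly = ∏ i, (X - C (l i))) {P Q : K}
    (h : ∀ i, P * l i + Q ≠ 0) : IsUnit (P • s + Q • (1 : Matrix n n K)) := by
  rw [isUnit_iff_isUnit_det, det_smul_add_smul_one hl, isUnit_iff_ne_zero]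
  exact Finset.prod_ne_zero_iff.mpr fun i _ => h i

theorem charpoly_smul_add_smul_one_mul_inv [Infinite K] (hl : s.charpoly = ∏ i, (X - C (l i)))
    (u v : K) {P Q : K} (h : ∀ i, P * l i + Q ≠ 0) :
    ((u • s + v • (1 : Matrix n n K)) * (P • s + Q • (1 : Matrix n n K))⁻¹).charpoly =
      ∏ i, (X - C ((u * l i + v) / (P * l i + Q))) := by
  set D := P • s + Q • (1 : Matrix n n K)
  have hD : IsUnit D.det := (isUnit_iff_isUnit_det D).mp (isUnit_smul_add_smul_one hl h)
  refine Polynomial.funext fun x => ?_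
  have hx : scalar n x - (u • s + v • 1) * D⁻¹ =
      ((x * P - u) • s + (x * Q - v) • (1 : Matrix n n K)) * D⁻¹ := by
    have hlin : (x * P - u) • s + (x * Q - v) • (1 : Matrix n n K) = x • D - (u • s + v • 1) := by
      simp only [D]; module
    rw [hlin, Matrix.sub_mul, Matrix.smul_mul, mul_nonsing_inv _ hD, scalar_apply,
      ← smul_one_eq_diagonal]
  rw [eval_charpoly, hx, det_mul, det_nonsing_inv, Ring.inverse_eq_inv, det_smul_add_smul_one hl,
    det_smul_add_smul_one hl, ← Finset.prod_inv_distrib, ← Finset.prod_mul_distrib, eval_prod]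
  refine Finset.prod_congr rfl fun i _ => ?_
  have hi := h i
  simp only [eval_sub, eval_X, eval_C]
  field_simp
  ring

theorem trace_smul_add_smul_one_mul_inv [Infinite K] (hl : s.charpoly = ∏ i, (X - C (l i)))
    (u v : K) {P Q : K} (h : ∀ i, P * l i + Q ≠ 0) :
    ((u • s + v • (1 : Matrix n n K)) * (P • s + Q • (1 : Matrix n n K))⁻¹).trace =
      ∑ i, (u * l i + v) / (P * l i + Q) :=
  trace_eq_sum_of_charpoly_eq_prod (charpoly_smul_add_smul_one_mul_inv hl u v h)

end Matrix

section DiskMobius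

variable {z z₁ z₂ w : ℂ}

theorem normSq_lt_one_of_norm_lt_one (hz : ‖z‖ < 1) : normSq z < 1 := by
  rw [normSq_eq_norm_sq]; exact pow_lt_one₀ (norm_nonneg z) hz two_ne_zero

theorem one_add_ne_zero_of_norm_lt_one {R : Type*} [NormedRing R] [NormOneClass R] {x : R}
    (hx : ‖x‖ < 1) : 1 + x ≠ 0 := by
  intro h
  rw [eq_neg_of_add_eq_zero_right h, norm_neg, norm_one] at hx
  exact lt_irrefl _ hx

theorem one_add_mul_ne_zero_of_norm_lt_one {R : Type*} [NormedRing R] [NormOneClass R] {x y : R}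
    (hx : ‖x‖ < 1) (hy : ‖y‖ < 1) : 1 + x * y ≠ 0 :=
  one_add_ne_zero_of_norm_lt_one <|
    (norm_mul_le x y).trans_lt (mul_lt_one_of_nonneg_of_lt_one_left (norm_nonneg x) hx hy.le)

theorem re_div_eq_re_mul_conj_div_normSq (z w : ℂ) : (z / w).re = (z * conj w).re / normSq w := by
  rw [div_eq_mul_inv, inv_def, ← mul_assoc, re_mul_ofReal, div_eq_mul_inv]

noncomputable def diskMobius (z w : ℂ) : ℂ := (w + conj z) / (1 + z * w)

theorem normSq_one_add_mul_sub_normSq_add_conj (z w : ℂ) :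
    normSq (1 + z * w) - normSq (w + conj z) = (1 - normSq z) * (1 - normSq w) := by
  simp only [normSq_apply, add_re, add_im, mul_re, mul_im, one_re, one_im, conj_re, conj_im]
  ring

theorem norm_diskMobius_lt_one (hz : ‖z‖ < 1) (hw : ‖w‖ < 1) : ‖diskMobius z w‖ < 1 := by
  have hden := one_add_mul_ne_zero_of_norm_lt_one hz hw
  rw [diskMobius, norm_div, div_lt_one (norm_pos_iff.mpr hden),
    ← sq_lt_sq₀ (norm_nonneg _) (norm_nonneg _), Complex.sq_norm, Complex.sq_norm]
  nlinarith [normSq_one_add_mul_sub_normSq_add_conj z w, normSq_lt_one_of_norm_lt_one hz,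
    normSq_lt_one_of_norm_lt_one hw]

theorem diskMobius_diskMobius (hz₁ : ‖z₁‖ < 1) (hz₂ : ‖z₂‖ < 1) (hw : ‖w‖ < 1) :
    diskMobius (diskMobius (-conj z₁) z₂) (diskMobius z₁ w) =
      (1 - conj z₁ * z₂) / (1 - z₁ * conj z₂) * diskMobius z₂ w := by
  have hz₁' : ‖-conj z₁‖ < 1 := by rwa [norm_neg, RCLike.norm_conj]
  have h₁ := one_add_mul_ne_zero_of_norm_lt_one hz₁ hw
  have h₂ := one_add_mul_ne_zero_of_norm_lt_one hz₂ hw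
  have h₁₂ : 1 - conj z₁ * z₂ ≠ 0 := by
    simpa [sub_eq_add_neg] using one_add_mul_ne_zero_of_norm_lt_one hz₁' hz₂
  have h₂₁ : 1 - z₁ * conj z₂ ≠ 0 := by
    simpa [sub_eq_add_neg] using
      one_add_mul_ne_zero_of_norm_lt_one (x := -z₁) (by simpa using hz₁) (by simpa using hz₂)
  have hN : (1 : ℂ) - z₁ * conj z₁ ≠ 0 := by
    rw [mul_conj, ← ofReal_one, ← ofReal_sub, ofReal_ne_zero, sub_ne_zero]
    exact (normSq_lt_one_of_norm_lt_one hz₁).ne'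
  have hconj : conj (diskMobius (-conj z₁) z₂) = (conj z₂ - conj z₁) / (1 - z₁ * conj z₂) := by
    simp only [diskMobius, map_div₀, map_add, map_mul, map_neg, conj_conj, map_one]
    ring
  have hnum : diskMobius z₁ w + conj (diskMobius (-conj z₁) z₂) =
      (w + conj z₂) * (1 - z₁ * conj z₁) / ((1 + z₁ * w) * (1 - z₁ * conj z₂)) := by
    rw [hconj, diskMobius, div_add_div _ _ h₁ h₂₁]
    ring
  have hden : 1 + diskMobius (-conj z₁) z₂ * diskMobius z₁ w =
      (1 + z₂ * w) * (1 - z₁ * conj z₁) / ((1 + z₁ * w) * (1 - conj z₁ * z₂)) := by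
    rw [diskMobius, diskMobius, div_mul_div_comm, one_add_div (mul_ne_zero ?_ h₁)]
    · simp only [map_neg, conj_conj]
      ring
    · simpa [sub_eq_add_neg] using h₁₂
  rw [diskMobius, hnum, hden, diskMobius, div_div_div_eq, div_mul_div_comm,
    div_eq_div_iff (mul_ne_zero (mul_ne_zero h₁ h₂₁) (mul_ne_zero h₂ hN)) (mul_ne_zero h₂₁ h₂)]
  ring

theorem re_mul_lt_re_mul_diskMobius (hz0 : z ≠ 0) (hz : ‖z‖ < 1) (hw : ‖w‖ < 1) :
    (z * w).re < (z * diskMobius z w).re := by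
  have hden := one_add_mul_ne_zero_of_norm_lt_one hz hw
  have hdiff : z * diskMobius z w - z * w = (normSq z - (z * w) ^ 2) / (1 + z * w) := by
    rw [diskMobius, ← mul_conj]; field_simp; ring
  rw [← sub_pos, ← sub_re, hdiff, div_re]
  have hu : normSq (z * w) < normSq z := by
    rw [normSq_mul]
    exact mul_lt_of_lt_one_right (normSq_pos.mpr hz0) (normSq_lt_one_of_norm_lt_one hw)
  have hz' := normSq_lt_one_of_norm_lt_one hz
  set u := z * w
  simp only [sub_re, sub_im, ofReal_re, ofReal_im, pow_two, mul_re, mul_im, add_re, add_im,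
    one_re, one_im]
  rw [normSq_apply] at hu
  rw [← add_div]
  refine div_pos ?_ (normSq_pos.mpr hden)
  have hre : u.re * u.re < normSq z := by nlinarith [mul_self_nonneg u.im]
  have hlo : -1 < u.re := by nlinarith
  have hhi : u.re < 1 := by nlinarith
  -- the numerator is `(|z|² - x²)(1 + x) + y²(1 - x)` for `u = x + y I`
  nlinarith [mul_pos (sub_pos.mpr hre) (neg_lt_iff_pos_add'.mp hlo),
    mul_nonneg (mul_self_nonneg u.im) (sub_nonneg.mpr hhi.le)]

theorem div_eq_mul_diskMobius {α β : ℂ} (hα : α ≠ 0) (w : ℂ) :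
    (α * w + β) / (conj β * w + conj α) = α / conj α * diskMobius (conj β / conj α) w := by
  have hα' : conj α ≠ 0 := (_root_.map_ne_zero _).mpr hα
  rw [diskMobius, map_div₀, conj_conj, conj_conj]
  field_simp
  ring

variable {ι : Type*} [Fintype ι] [Nonempty ι] {l : ι → ℂ}

theorem eq_zero_of_sum_diskMobius_eq_zero (hl : ∀ i, ‖l i‖ < 1) (hsum : ∑ i, l i = 0)
    (hz : ‖z‖ < 1) (h : ∑ i, diskMobius z (l i) = 0) : z = 0 := by
  by_contra hz0
  have hlt : ∑ i, (z * l i).re < ∑ i, (z * diskMobius z (l i)).re :=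
    Finset.sum_lt_sum_of_nonempty Finset.univ_nonempty fun i _ =>
      re_mul_lt_re_mul_diskMobius hz0 hz (hl i)
  simp only [← re_sum, ← Finset.mul_sum, hsum, h, lt_irrefl] at hlt

theorem eq_of_sum_diskMobius_eq_zero (hl : ∀ i, ‖l i‖ < 1) (hz₁ : ‖z₁‖ < 1) (hz₂ : ‖z₂‖ < 1)
    (h₁ : ∑ i, diskMobius z₁ (l i) = 0) (h₂ : ∑ i, diskMobius z₂ (l i) = 0) : z₁ = z₂ := by
  have hz₁' : ‖-conj z₁‖ < 1 := by rwa [norm_neg, RCLike.norm_conj]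
  have hzero : diskMobius (-conj z₁) z₂ = 0 := by
    refine eq_zero_of_sum_diskMobius_eq_zero (fun i => norm_diskMobius_lt_one hz₁ (hl i)) h₁
      (norm_diskMobius_lt_one hz₁' hz₂) ?_
    simp_rw [diskMobius_diskMobius hz₁ hz₂ (hl _)]
    rw [← Finset.mul_sum, h₂, mul_zero]
  rw [diskMobius, div_eq_zero_iff, map_neg, conj_conj, ← sub_eq_add_neg, sub_eq_zero] at hzero
  exact hzero.resolve_right (one_add_mul_ne_zero_of_norm_lt_one hz₁' hz₂) |>.symm

end DiskMobius

section Potential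

variable {ι : Type*} [Fintype ι] {l : ι → ℂ} {z w : ℂ}

noncomputable def diskMobiusPotential (l : ι → ℂ) (z : ℂ) : ℝ :=
  ∑ i, (Real.log (‖1 + z * l i‖ ^ 2) - Real.log (1 - ‖z‖ ^ 2))

theorem hasDerivAt_log_normSq_sub_log (hz : ‖z‖ < 1) (hw : ‖w‖ < 1) (v : ℂ) :
    HasDerivAt (fun t : ℝ => Real.log (‖1 + (z + t • v) * w‖ ^ 2) - Real.log (1 - ‖z + t • v‖ ^ 2))
      (2 * (v * diskMobius z w).re / (1 - ‖z‖ ^ 2)) 0 := by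
  have hline : HasDerivAt (fun t : ℝ => z + t • v) v 0 := by
    simpa using ((hasDerivAt_id (0 : ℝ)).smul_const v).const_add z
  have hden := one_add_mul_ne_zero_of_norm_lt_one hz hw
  have hN : 1 - ‖z‖ ^ 2 ≠ 0 := by
    rw [Complex.sq_norm]; exact (sub_pos.mpr (normSq_lt_one_of_norm_lt_one hz)).ne'
  have h₁ := (((hline.mul_const w).const_add 1).norm_sq).log (by simpa using hden)
  have h₂ := ((hline.norm_sq).const_sub 1).log (by simpa using hN)
  refine (h₁.sub h₂).congr_deriv ?_
  have key : v * diskMobius z w =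
      ((1 - normSq z : ℝ) : ℂ) * (v * w / (1 + z * w)) + v * conj z := by
    have hden' : 1 + w * z ≠ 0 := by rwa [mul_comm]
    rw [diskMobius]; push_cast; rw [← mul_conj]; field_simp; ring
  have hre := congrArg re key
  rw [add_re, re_ofReal_mul] at hre
  rw [Complex.sq_norm] at hN
  simp only [zero_smul, add_zero, Complex.inner, Complex.sq_norm, mul_div_assoc,
    ← re_div_eq_re_mul_conj_div_normSq, hre]
  field_simp
  ring

theorem sum_diskMobius_eq_zero_of_isLocalMin (hl : ∀ i, ‖l i‖ < 1) (hz : ‖z‖ < 1)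
    (hmin : IsLocalMin (diskMobiusPotential l) z) : ∑ i, diskMobius z (l i) = 0 := by
  set S := ∑ i, diskMobius z (l i)
  -- along the direction `conj S` the derivative is `2 |S|² / (1 - |z|²)`
  have hderiv : HasDerivAt (fun t : ℝ => diskMobiusPotential l (z + t • conj S))
      (∑ i, 2 * (conj S * diskMobius z (l i)).re / (1 - ‖z‖ ^ 2)) 0 :=
    HasDerivAt.fun_sum fun i _ => hasDerivAt_log_normSq_sub_log hz (hl i) _
  have hmin' : IsLocalMin (fun t : ℝ => diskMobiusPotential l (z + t • conj S)) 0 :=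
    IsLocalMin.comp_continuous (f := diskMobiusPotential l) (g := fun t : ℝ => z + t • conj S)
      (by simpa using hmin) (by fun_prop)
  have hzero := hmin'.hasDerivAt_eq_zero hderiv
  rw [← Finset.sum_div, ← Finset.mul_sum, ← re_sum, ← Finset.mul_sum, ← normSq_eq_conj_mul_self,
    ofReal_re, div_eq_zero_iff, mul_eq_zero, normSq_eq_zero, Complex.sq_norm] at hzero
  have := sub_pos.mpr (normSq_lt_one_of_norm_lt_one hz)
  rcases hzero with (h | h) | h
  · norm_num at h
  · exact h
  · linarith

theorem continuousOn_diskMobiusPotential (hl : ∀ i, ‖l i‖ < 1) :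
    ContinuousOn (diskMobiusPotential l) (ball 0 1) := by
  refine continuousOn_finsetSum _ fun i _ => ContinuousOn.sub ?_ ?_
  · refine ContinuousOn.log (by fun_prop) fun z hz => ?_
    rw [mem_ball_zero_iff] at hz
    exact pow_ne_zero 2 (norm_ne_zero_iff.mpr (one_add_mul_ne_zero_of_norm_lt_one hz (hl i)))
  · refine ContinuousOn.log (by fun_prop) fun z hz => ?_
    rw [mem_ball_zero_iff] at hz
    nlinarith [norm_nonneg z]

theorem diskMobiusPotential_pos [Nonempty ι] (hl : ∀ i, ‖l i‖ < 1) (hz : ‖z‖ < 1)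
    (h : ∀ i, 1 - ‖z‖ ^ 2 < (1 - ‖l i‖) ^ 2) : 0 < diskMobiusPotential l z := by
  refine Finset.sum_pos (fun i _ => sub_pos.mpr (Real.log_lt_log ?_ ((h i).trans_le ?_)))
    Finset.univ_nonempty
  · nlinarith [norm_nonneg z]
  · have hzl : ‖z * l i‖ ≤ ‖l i‖ := by
      rw [norm_mul]; exact mul_le_of_le_one_left (norm_nonneg _) hz.le
    have htri : 1 - ‖z * l i‖ ≤ ‖1 + z * l i‖ := by
      simpa using norm_sub_norm_le (1 : ℂ) (-(z * l i))
    exact pow_le_pow_left₀ (sub_nonneg.mpr (hl i).le) (by linarith) 2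

theorem exists_isLocalMin_diskMobiusPotential [Nonempty ι] (hl : ∀ i, ‖l i‖ < 1) :
    ∃ z, ‖z‖ < 1 ∧ IsLocalMin (diskMobiusPotential l) z := by
  have hlim : Tendsto (fun r : ℝ => 1 - r ^ 2) (𝓝[<] 1) (𝓝 0) := by
    have : Tendsto (fun r : ℝ => 1 - r ^ 2) (𝓝 1) (𝓝 (1 - 1 ^ 2)) :=
      (continuous_const.sub (continuous_pow 2)).tendsto 1
    simpa using this.mono_left nhdsWithin_le_nhds
  obtain ⟨r, ⟨hr0, hr1⟩, hrl⟩ : ∃ r : ℝ, r ∈ Set.Ioo 0 1 ∧ ∀ i, 1 - r ^ 2 < (1 - ‖l i‖) ^ 2 :=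
    (Eventually.and (Ioo_mem_nhdsLT zero_lt_one) (eventually_all.mpr fun i =>
      hlim.eventually (gt_mem_nhds (pow_pos (sub_pos.mpr (hl i)) 2)))).exists
  obtain ⟨z, hz, hmin⟩ := (isCompact_closedBall (0 : ℂ) r).exists_isMinOn
    ⟨0, mem_closedBall_self hr0.le⟩
    ((continuousOn_diskMobiusPotential hl).mono (closedBall_subset_ball hr1))
  rw [mem_closedBall_zero_iff] at hz
  have hzr : ‖z‖ < r := by
    refine hz.lt_of_ne fun heq => ?_
    have hpos := diskMobiusPotential_pos hl (heq ▸ hr1) (heq ▸ hrl)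
    have h0 : diskMobiusPotential l z ≤ diskMobiusPotential l 0 :=
      hmin (mem_closedBall_self hr0.le)
    have hzero : diskMobiusPotential l 0 = 0 := by simp [diskMobiusPotential]
    linarith
  exact ⟨z, hzr.trans hr1, hmin.isLocalMin (mem_of_superset
    (isOpen_ball.mem_nhds (mem_ball_zero_iff.mpr hzr)) ball_subset_closedBall)⟩

theorem existsUnique_sum_diskMobius_eq_zero [Nonempty ι] (hl : ∀ i, ‖l i‖ < 1) :
    ∃! z, ‖z‖ < 1 ∧ ∑ i, diskMobius z (l i) = 0 := by
  obtain ⟨z, hz, hmin⟩ := exists_isLocalMin_diskMobiusPotential hl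
  have hsum := sum_diskMobius_eq_zero_of_isLocalMin hl hz hmin
  exact ⟨z, ⟨hz, hsum⟩, fun z' ⟨hz', h'⟩ => eq_of_sum_diskMobius_eq_zero hl hz' hz h' hsum⟩

end Potential

section HingeParameters

noncomputable def hingeAlpha (a b : ℝ) : ℂ := ((a : ℂ) + (a : ℂ)⁻¹) + (b : ℂ) * I

noncomputable def hingeBeta (a b : ℝ) : ℂ := (b : ℂ) + ((a : ℂ) - (a : ℂ)⁻¹) * I

noncomputable def hingePoint (a b : ℝ) : ℂ := conj (hingeBeta a b) / conj (hingeAlpha a b)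

variable {a b : ℝ}

theorem hingeAlpha_eq : hingeAlpha a b = ((a + a⁻¹ : ℝ) : ℂ) + (b : ℝ) * I := by
  push_cast; rfl

theorem hingeBeta_eq : hingeBeta a b = (b : ℝ) + ((a - a⁻¹ : ℝ) : ℂ) * I := by
  push_cast; rfl

theorem hingeAlpha_ne_zero (ha : 0 < a) : hingeAlpha a b ≠ 0 := by
  intro h
  have hre := congrArg re h
  rw [hingeAlpha_eq, add_re, ofReal_re, re_ofReal_mul, I_re, mul_zero, add_zero, zero_re] at hre
  have : 0 < a + a⁻¹ := by positivity
  linarith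

theorem conj_hingeAlpha_ne_zero (ha : 0 < a) : conj (hingeAlpha a b) ≠ 0 :=
  (_root_.map_ne_zero _).mpr (hingeAlpha_ne_zero ha)

theorem normSq_hingeAlpha_sub_normSq_hingeBeta (ha : 0 < a) :
    normSq (hingeAlpha a b) - normSq (hingeBeta a b) = 4 := by
  rw [hingeAlpha_eq, hingeBeta_eq, normSq_add_mul_I, normSq_add_mul_I]
  field_simp
  ring

theorem norm_hingePoint_lt_one (ha : 0 < a) : ‖hingePoint a b‖ < 1 := by
  have hα := conj_hingeAlpha_ne_zero (b := b) ha
  rw [hingePoint, norm_div, div_lt_one (norm_pos_iff.mpr hα), RCLike.norm_conj, RCLike.norm_conj,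
    ← sq_lt_sq₀ (norm_nonneg _) (norm_nonneg _), Complex.sq_norm, Complex.sq_norm]
  linarith [normSq_hingeAlpha_sub_normSq_hingeBeta (b := b) ha]

theorem cayley_hingePoint (ha : 0 < a) :
    (1 - I * hingePoint a b) / (1 + I * hingePoint a b) = ((a ^ 2)⁻¹ : ℝ) - (b / a : ℝ) * I := by
  have hα := conj_hingeAlpha_ne_zero (b := b) ha
  have ha' : (a : ℂ) ≠ 0 := ofReal_ne_zero.mpr ha.ne'
  have hconjα : conj (hingeAlpha a b) = (a : ℂ) + (a : ℂ)⁻¹ - b * I := by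
    simp [hingeAlpha, sub_eq_add_neg]
  have hconjβ : conj (hingeBeta a b) = (b : ℂ) - ((a : ℂ) - (a : ℂ)⁻¹) * I := by
    simp [hingeBeta, sub_eq_add_neg]
  have hplus : 1 + I * hingePoint a b = 2 * a / conj (hingeAlpha a b) := by
    rw [hingePoint, mul_div_assoc', one_add_div hα, hconjα, hconjβ]
    congr 1
    linear_combination (-(a : ℂ) + (a : ℂ)⁻¹) * I_sq
  have hminus : 1 - I * hingePoint a b = 2 * ((a : ℂ)⁻¹ - b * I) / conj (hingeAlpha a b) := by
    rw [hingePoint, mul_div_assoc', one_sub_div hα, hconjα, hconjβ]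
    congr 1
    linear_combination ((a : ℂ) - (a : ℂ)⁻¹) * I_sq
  rw [hplus, hminus, div_div_div_cancel_right₀ hα]
  push_cast
  field_simp

theorem eq_of_cayley_eq {z w : ℂ} (hz : ‖z‖ < 1) (hw : ‖w‖ < 1)
    (h : (1 - I * z) / (1 + I * z) = (1 - I * w) / (1 + I * w)) : z = w := by
  have hz' := one_add_ne_zero_of_norm_lt_one (x := I * z) (by simpa using hz)
  have hw' := one_add_ne_zero_of_norm_lt_one (x := I * w) (by simpa using hw)
  rw [div_eq_div_iff hz' hw'] at h
  have : (2 * I) * (w - z) = 0 := by linear_combination h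
  simpa [I_ne_zero, sub_eq_zero, eq_comm] using this

theorem re_cayley_pos {z : ℂ} (hz : ‖z‖ < 1) : 0 < ((1 - I * z) / (1 + I * z)).re := by
  have hz' := one_add_ne_zero_of_norm_lt_one (x := I * z) (by simpa using hz)
  have hN : z.re * z.re + z.im * z.im < 1 := by
    rw [← normSq_apply]; exact normSq_lt_one_of_norm_lt_one hz
  rw [re_div_eq_re_mul_conj_div_normSq]
  refine div_pos ?_ (normSq_pos.mpr hz')
  simp only [mul_re, sub_re, sub_im, one_re, one_im, mul_im, I_re, I_im, conj_re, conj_im,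
    add_re, add_im]
  nlinarith

theorem injOn_hingePoint : Set.InjOn (fun p : ℝ × ℝ => hingePoint p.1 p.2) {p | 0 < p.1} := by
  rintro ⟨a, b⟩ (ha : 0 < a) ⟨a', b'⟩ (ha' : 0 < a') (h : hingePoint a b = hingePoint a' b')
  have hc := cayley_hingePoint (b := b) ha
  rw [h, cayley_hingePoint ha'] at hc
  have hre := congrArg re hc
  have him := congrArg im hc
  simp only [sub_re, sub_im, ofReal_re, ofReal_im, mul_re, mul_im, I_re, I_im, mul_zero,
    mul_one, sub_zero, add_zero, zero_sub, neg_inj] at hre him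
  obtain rfl : a' = a := (sq_eq_sq₀ ha'.le ha.le).mp (inv_injective hre)
  field_simp at him
  rw [him]

theorem exists_hingePoint_eq {z : ℂ} (hz : ‖z‖ < 1) : ∃ a b : ℝ, 0 < a ∧ hingePoint a b = z := by
  set w := (1 - I * z) / (1 + I * z)
  have hw := re_cayley_pos hz
  set a := (√w.re)⁻¹
  have ha : 0 < a := inv_pos.mpr (Real.sqrt_pos.mpr hw)
  refine ⟨a, -(a * w.im), ha, eq_of_cayley_eq (norm_hingePoint_lt_one ha) hz ?_⟩
  have hre : (a ^ 2)⁻¹ = w.re := by rw [inv_pow, inv_inv, Real.sq_sqrt hw.le]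
  have him : -(a * w.im) / a = -w.im := by field_simp
  rw [cayley_hingePoint ha, hre, him, ofReal_neg, neg_mul, sub_neg_eq_add, re_add_im]

theorem existsUnique_hingePoint_eq {z : ℂ} (hz : ‖z‖ < 1) :
    ∃! p : ℝ × ℝ, 0 < p.1 ∧ hingePoint p.1 p.2 = z := by
  obtain ⟨a, b, ha, h⟩ := exists_hingePoint_eq hz
  exact ⟨(a, b), ⟨ha, h⟩, fun p ⟨hp, h'⟩ => injOn_hingePoint hp ha (h'.trans h.symm)⟩

theorem conj_hingeBeta_mul_add_conj_hingeAlpha_ne_zero (ha : 0 < a) {w : ℂ} (hw : ‖w‖ < 1) :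
    conj (hingeBeta a b) * w + conj (hingeAlpha a b) ≠ 0 := by
  have hα := conj_hingeAlpha_ne_zero (b := b) ha
  have hfactor : conj (hingeBeta a b) * w + conj (hingeAlpha a b) =
      conj (hingeAlpha a b) * (1 + hingePoint a b * w) := by
    rw [hingePoint]; field_simp; ring
  rw [hfactor]
  exact mul_ne_zero hα (one_add_mul_ne_zero_of_norm_lt_one (norm_hingePoint_lt_one ha) hw)

theorem trace_hingeLFT {m : ℕ} {s : Matrix (Fin m) (Fin m) ℂ} {l : Fin m → ℂ}
    (hl : s.charpoly = ∏ i, (X - C (l i))) (hl1 : ∀ i, ‖l i‖ < 1) (ha : 0 < a) :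
    (hingeLFT m s a b).trace =
      hingeAlpha a b / conj (hingeAlpha a b) * ∑ i, diskMobius (hingePoint a b) (l i) := by
  change ((hingeAlpha a b • s + hingeBeta a b • 1) *
    (conj (hingeBeta a b) • s + conj (hingeAlpha a b) • 1)⁻¹).trace = _
  rw [trace_smul_add_smul_one_mul_inv hl _ _
    fun i => conj_hingeBeta_mul_add_conj_hingeAlpha_ne_zero ha (hl1 i), Finset.mul_sum]
  exact Finset.sum_congr rfl fun i _ => div_eq_mul_diskMobius (hingeAlpha_ne_zero ha) _

end HingeParameters

/-- For any square complex matrix `s` with spectrum in the open unit disk,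
there is a unique element of the group `N` of disk automorphisms whose linear
fractional action normalizes `s` to have vanishing trace. -/
theorem unique_trace_normalizing_disk_automorphism (m : ℕ) (hm : 1 ≤ m)
    (s : Matrix (Fin m) (Fin m) ℂ)
    (hs : ∀ lam : ℂ, (s - lam • (1 : Matrix (Fin m) (Fin m) ℂ)).det = 0 →
      ‖lam‖ < 1) :
    ∃! p : ℝ × ℝ, 0 < p.1 ∧
      IsUnit ((starRingEnd ℂ ((p.2 : ℂ) + ((p.1 : ℂ) - (p.1 : ℂ)⁻¹) * Complex.I)) • s +
        (starRingEnd ℂ (((p.1 : ℂ) + (p.1 : ℂ)⁻¹) + (p.2 : ℂ) * Complex.I)) •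
          (1 : Matrix (Fin m) (Fin m) ℂ)) ∧
      (hingeLFT m s p.1 p.2).trace = 0 := by
  have : Nonempty (Fin m) := ⟨⟨0, hm⟩⟩
  obtain ⟨l, hl⟩ := s.exists_charpoly_eq_prod
  have hl1 : ∀ i, ‖l i‖ < 1 := fun i => hs _ (det_sub_smul_one_eq_zero hl i)
  obtain ⟨z₀, ⟨hz₀, hsum₀⟩, huniq⟩ := existsUnique_sum_diskMobius_eq_zero hl1
  refine (existsUnique_congr fun p => and_congr_right fun hp => ?_).mp
    (existsUnique_hingePoint_eq hz₀)
  rw [trace_hingeLFT hl hl1 hp]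
  constructor
  · rintro rfl
    exact ⟨isUnit_smul_add_smul_one hl fun i =>
      conj_hingeBeta_mul_add_conj_hingeAlpha_ne_zero hp (hl1 i), by rw [hsum₀, mul_zero]⟩
  · rintro ⟨-, htr⟩
    refine huniq _ ⟨norm_hingePoint_lt_one hp, (mul_eq_zero.mp htr).resolve_left ?_⟩
    exact div_ne_zero (hingeAlpha_ne_zero hp) (conj_hingeAlpha_ne_zero hp)
end

section
/- Let V be a real vector space and let J₀, J₁, J₂ : V → V be real-linear maps with J₀ ∘ J₀ = -id, J₁ ∘ J₁ = -id, and J₂ ∘ J₂ = -id. Assume that J₂ - J₀ and J₁ - J₀ are bijective. Then there is a linear automorphism φ of V satisfying (J₂ - J₀) ∘ φ = J₁ - J₀, and this φ satisfies the intertwining relation J₂ ∘ φ = φ ∘ J₁; that is, φ is a complex-linear isomorphism from (V, J₁) to (V, J₂). -/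
/-- The hinge construction: given complex structures `J₀`, `J₁`, `J₂` on a real
vector space with `J₂ - J₀` and `J₁ - J₀` bijective, the linear automorphism
`φ = (J₂ - J₀)⁻¹ ∘ (J₁ - J₀)` intertwines `J₁` and `J₂`, i.e. is a complex
linear isomorphism from `(V, J₁)` to `(V, J₂)`. -/
theorem hinge_intertwining_automorphism
    (V : Type*) [AddCommGroup V] [Module ℝ V]
    (J₀ J₁ J₂ : V →ₗ[ℝ] V)
    (h0 : J₀ ∘ₗ J₀ = -LinearMap.id) (h1 : J₁ ∘ₗ J₁ = -LinearMap.id)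
    (h2 : J₂ ∘ₗ J₂ = -LinearMap.id)
    (h20 : Function.Bijective (J₂ - J₀)) (h10 : Function.Bijective (J₁ - J₀)) :
    ∃ φ : V ≃ₗ[ℝ] V,
      (J₂ - J₀) ∘ₗ (φ : V →ₗ[ℝ] V) = J₁ - J₀ ∧
      J₂ ∘ₗ (φ : V →ₗ[ℝ] V) = (φ : V →ₗ[ℝ] V) ∘ₗ J₁ := by
  set e₂ := LinearEquiv.ofBijective (J₂ - J₀) h20 with he₂
  set e₁ := LinearEquiv.ofBijective (J₁ - J₀) h10 with he₁
  refine ⟨e₁.trans e₂.symm, ?_, ?_⟩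
  · ext v
    exact e₂.apply_symm_apply (e₁ v)
  · -- key identities
    have key2 : (J₂ - J₀) ∘ₗ J₂ = -(J₀ ∘ₗ (J₂ - J₀)) := by
      rw [LinearMap.sub_comp, LinearMap.comp_sub, h2, h0]
      abel
    have key1 : (J₁ - J₀) ∘ₗ J₁ = -(J₀ ∘ₗ (J₁ - J₀)) := by
      rw [LinearMap.sub_comp, LinearMap.comp_sub, h1, h0]
      abel
    ext v
    apply h20.injective
    have hφ : (J₂ - J₀) (e₂.symm (e₁ v)) = (J₁ - J₀) v := e₂.apply_symm_apply _
    have l2 := congrArg (fun f : V →ₗ[ℝ] V => f (e₂.symm (e₁ v))) key2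
    have l1 := congrArg (fun f : V →ₗ[ℝ] V => f v) key1
    simp only [LinearMap.comp_apply, LinearMap.neg_apply] at l2 l1
    simp only [LinearMap.comp_apply, LinearEquiv.coe_coe, LinearEquiv.trans_apply]
    have hφ' : (J₂ - J₀) (e₂.symm (e₁ (J₁ v))) = (J₁ - J₀) (J₁ v) :=
      e₂.apply_symm_apply _
    rw [l2, hφ, ← l1, ← hφ']
end

section
/- Let V be a finite-dimensional real vector space and let J₀, J₁ be complex structures on V such that J₁ - J₀ is bijective. Let V₀ and V₁ be the i-eigenspaces in ℂ ⊗[ℝ] V of the complexified maps (J₀)_ℂ and (J₁)_ℂ respectively. Then V₀ ∩ V₁ = 0 and V₀ + V₁ = ℂ ⊗[ℝ] V. -/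
open TensorProduct

/-- If `J₀`, `J₁` are complex structures on a finite-dimensional real vector
space with `J₁ - J₀` bijective, then the `i`-eigenspaces of their
complexifications intersect trivially and span the complexification. -/
theorem i_eigenspaces_complementary
    (V : Type*) [AddCommGroup V] [Module ℝ V] [FiniteDimensional ℝ V]
    (J₀ J₁ : V →ₗ[ℝ] V)
    (h0 : J₀ ∘ₗ J₀ = -LinearMap.id) (h1 : J₁ ∘ₗ J₁ = -LinearMap.id)
    (hbij : Function.Bijective (J₁ - J₀)) :
    Module.End.eigenspace
        (LinearMap.baseChange ℂ J₀ : Module.End ℂ (ℂ ⊗[ℝ] V)) Complex.I ⊓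
      Module.End.eigenspace
        (LinearMap.baseChange ℂ J₁ : Module.End ℂ (ℂ ⊗[ℝ] V)) Complex.I = ⊥ ∧
    Module.End.eigenspace
        (LinearMap.baseChange ℂ J₀ : Module.End ℂ (ℂ ⊗[ℝ] V)) Complex.I ⊔
      Module.End.eigenspace
        (LinearMap.baseChange ℂ J₁ : Module.End ℂ (ℂ ⊗[ℝ] V)) Complex.I = ⊤ := by
  set A := (LinearMap.baseChange ℂ J₀ : Module.End ℂ (ℂ ⊗[ℝ] V)) with hA
  set B := (LinearMap.baseChange ℂ J₁ : Module.End ℂ (ℂ ⊗[ℝ] V)) with hB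
  have hA2 : ∀ x, A (A x) = -x := by
    intro x
    have : A ∘ₗ A = -LinearMap.id := by
      rw [hA, ← LinearMap.baseChange_comp, h0]; ext; simp
    simpa using congrArg (fun f => f x) this
  have hB2 : ∀ x, B (B x) = -x := by
    intro x
    have : B ∘ₗ B = -LinearMap.id := by
      rw [hB, ← LinearMap.baseChange_comp, h1]; ext; simp
    simpa using congrArg (fun f => f x) this
  have hT : Function.Bijective (B - A) := by
    have heq : B - A = (J₁ - J₀).baseChange ℂ := by
      rw [hA, hB, LinearMap.baseChange_sub]
    rw [heq, LinearMap.baseChange_eq_ltensor]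
    exact ⟨Module.Flat.lTensor_preserves_injective_linearMap _ hbij.1,
      LinearMap.lTensor_surjective ℂ hbij.2⟩
  constructor
  · rw [eq_bot_iff]
    intro z hz
    rw [Submodule.mem_inf, Module.End.mem_eigenspace_iff, Module.End.mem_eigenspace_iff] at hz
    have : (B - A) z = 0 := by simp [hz.1, hz.2]
    simpa using hT.1 (by simpa using this)
  · rw [eq_top_iff]
    intro z _
    obtain ⟨u, hu⟩ := hT.2 ((-2 * Complex.I) • z)
    have h' : B u - A u = (-2 * Complex.I) • z := by simpa using hu
    have hI : (Complex.I / 2) * (-2 * Complex.I) = 1 := by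
      ring_nf
      rw [Complex.I_sq]
      ring
    refine Submodule.mem_sup.2 ⟨(1/2 : ℂ) • u - (Complex.I/2) • A u, ?_,
      -(1/2 : ℂ) • u + (Complex.I/2) • B u, ?_, ?_⟩
    · rw [Module.End.mem_eigenspace_iff]
      simp only [map_sub, map_smul, hA2, smul_neg]
      match_scalars
      · ring_nf
        rw [Complex.I_sq]
        ring
      · ring
    · rw [Module.End.mem_eigenspace_iff]
      simp only [map_add, map_neg, map_smul, hB2, smul_neg]
      match_scalars
      · ring_nf
        rw [Complex.I_sq]
        ring
      · ring
    · have key : ((1/2 : ℂ) • u - (Complex.I/2) • A u) + (-(1/2 : ℂ) • u + (Complex.I/2) • B u)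
          = (Complex.I/2) • (B u - A u) := by module
      rw [key, h', smul_smul, hI, one_smul]
end

section
/- Let V be a real vector space, let Jx and Jy be complex structures on V, let v, w ∈ V, and let a, b ∈ ℝ. If 1⊗v - i·(1⊗(Jx v)) = (a + b·i) · (1⊗w - i·(1⊗(Jy w))) in ℂ ⊗[ℝ] V, then v = a·w + b·(Jy w) and Jx v = Jy v. -/
open TensorProduct

/-- If the Sato vectors of `(v, Jx)` and `(w, Jy)` are complex-proportional in
the complexification, with proportionality factor `a + b·i`, then
`v = a·w + b·(Jy w)` and `Jx v = Jy v`. -/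
theorem sato_vectors_proportional
    (V : Type*) [AddCommGroup V] [Module ℝ V]
    (Jx Jy : V →ₗ[ℝ] V)
    (hx : Jx ∘ₗ Jx = -LinearMap.id) (hy : Jy ∘ₗ Jy = -LinearMap.id)
    (v w : V) (a b : ℝ)
    (h : (1 : ℂ) ⊗ₜ[ℝ] v - Complex.I • ((1 : ℂ) ⊗ₜ[ℝ] (Jx v)) =
        ((a : ℂ) + (b : ℂ) * Complex.I) •
          ((1 : ℂ) ⊗ₜ[ℝ] w - Complex.I • ((1 : ℂ) ⊗ₜ[ℝ] (Jy w)))) :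
    v = a • w + b • Jy w ∧ Jx v = Jy v := by
  -- rewrite everything into pure tensors
  have h' : (1 : ℂ) ⊗ₜ[ℝ] v - (Complex.I) ⊗ₜ[ℝ] (Jx v) =
      ((a : ℂ) + (b : ℂ) * Complex.I) ⊗ₜ[ℝ] w -
        (((a : ℂ) + (b : ℂ) * Complex.I) * Complex.I) ⊗ₜ[ℝ] (Jy w) := by
    have := h
    rw [smul_sub, smul_smul] at this
    rw [smul_tmul', smul_tmul', smul_tmul'] at this
    simpa using this
  -- real-linear projections
  set fre : ℂ ⊗[ℝ] V →ₗ[ℝ] V :=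
    (TensorProduct.lid ℝ V).toLinearMap ∘ₗ TensorProduct.map Complex.reLm LinearMap.id with hfre
  set fim : ℂ ⊗[ℝ] V →ₗ[ℝ] V :=
    (TensorProduct.lid ℝ V).toLinearMap ∘ₗ TensorProduct.map Complex.imLm LinearMap.id with hfim
  have hre : ∀ (c : ℂ) (u : V), fre (c ⊗ₜ[ℝ] u) = c.re • u := by
    intro c u; simp [hfre]
  have him : ∀ (c : ℂ) (u : V), fim (c ⊗ₜ[ℝ] u) = c.im • u := by
    intro c u; simp [hfim]
  have h1 : v = a • w + b • Jy w := by
    have := congrArg fre h'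
    rw [map_sub, map_sub, hre, hre, hre, hre] at this
    simpa [sub_eq_add_neg] using this
  have h2 : Jx v = a • Jy w - b • w := by
    have h3 := congrArg fim h'
    rw [map_sub, map_sub, him, him, him, him] at h3
    simp at h3
    have h4 : Jx v = a • Jy w - b • w := by
      have := congrArg Neg.neg h3
      simp at this
      linear_combination (norm := module) this
    exact h4
  refine ⟨h1, ?_⟩
  have hyy : Jy (Jy w) = -w := by
    have := congrFun (congrArg (fun f => f.toFun) hy) w
    simpa using this
  rw [h2, h1]
  simp [map_add, map_smul, hyy, sub_eq_add_neg, smul_neg]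
end
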